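/- arXiv:2009.07549 — 7 statements merged into one kernel-verified Lean document; each statement's English description precedes it below -/
import Mathlib

section
/- Let m ≥ 0 be an integer and let a_0, …, a_m be positive real numbers satisfying a Diophantine bound with constants C > 0 and ν ≥ 1. Then there exists c > 0 such that for every z ∈ ℂ^{m+1} and every real t ≥ 1, Σ_{j=0}^{m} |e^{i a_j t} − 1|·|z_j| ≥ c · t^{1−ν} · min_{0≤j≤m} |z_j|. -/
open scoped Real

/-- The set of integer lattice points in Euclidean space `ℝ^{m+1}`. -/
def intLattice (m : ℕ) : Set (EuclideanSpace ℝ (Fin (m + 1))) :=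
  {w | ∀ j, ∃ n : ℤ, w j = (n : ℝ)}

/-! The Euclidean distance from `t a / 2π` to `ℤ^{m+1}` is at most the `ℓ¹` distance to the rounded
point, and Jordan's inequality `|sin s| ≥ 2|s|/π` on `|s| ≤ π/2` bounds each `|x_j - round x_j|`
by a quarter of `|e^{i a_j t} - 1|`; so the Diophantine bound transfers to the chord lengths, with
`c = 4C`. -/

theorem EuclideanSpace.dist_le_sum_dist {ι : Type*} [Fintype ι] (x y : EuclideanSpace ℝ ι) :
    dist x y ≤ ∑ i, dist (x i) (y i) := by
  have hsum : 0 ≤ ∑ i, dist (x i) (y i) := Finset.sum_nonneg fun i _ => dist_nonneg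
  rw [← pow_le_pow_iff_left₀ dist_nonneg hsum two_ne_zero, EuclideanSpace.dist_sq_eq]
  exact Finset.sum_sq_le_sq_sum_of_nonneg fun i _ => dist_nonneg

theorem infDist_intLattice_le_sum_abs_sub_round {m : ℕ} (v : EuclideanSpace ℝ (Fin (m + 1))) :
    Metric.infDist v (intLattice m) ≤ ∑ j, |v j - round (v j)| := by
  let w : EuclideanSpace ℝ (Fin (m + 1)) := WithLp.toLp 2 fun j => (round (v j) : ℝ)
  calc Metric.infDist v (intLattice m) ≤ dist v w :=
        Metric.infDist_le_dist_of_mem fun j => ⟨round (v j), rfl⟩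
    _ ≤ ∑ j, dist (v j) (w j) := EuclideanSpace.dist_le_sum_dist v w
    _ = ∑ j, |v j - round (v j)| := rfl

theorem four_mul_abs_sub_round_le_norm_exp_I_mul_sub_one (y : ℝ) :
    4 * |y / (2 * π) - round (y / (2 * π))| ≤ ‖Complex.exp (Complex.I * y) - 1‖ := by
  set x := y / (2 * π)
  set n := round x
  have hsin : |Real.sin (y / 2)| = |Real.sin (π * (x - n))| := by
    rw [show y / 2 = π * (x - n) + n * π by simp only [x]; field_simp; ring,
      Real.sin_add_int_mul_pi, abs_mul, abs_neg_one_zpow, one_mul]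
  have hsmall : |π * (x - n)| ≤ π / 2 := by
    rw [abs_mul, abs_of_pos Real.pi_pos]
    nlinarith [abs_sub_round x, Real.pi_pos]
  calc 4 * |x - n| = 2 * (2 / π * |π * (x - n)|) := by
        rw [abs_mul, abs_of_pos Real.pi_pos]; field_simp; ring
    _ ≤ 2 * |Real.sin (π * (x - n))| := by gcongr; exact Real.mul_abs_le_abs_sin hsmall
    _ = ‖Complex.exp (Complex.I * y) - 1‖ := by
        rw [Complex.norm_exp_I_mul_ofReal_sub_one, norm_mul, Real.norm_two, Real.norm_eq_abs, hsin]

theorem eta_diophantine_lower_bound_general (m : ℕ) (a : Fin (m + 1) → ℝ)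
    (C ν : ℝ) (hC : 0 < C)
    (hdio : ∀ t : ℝ, 1 ≤ t →
      C * t ^ (1 - ν) ≤ Metric.infDist
        (show EuclideanSpace ℝ (Fin (m + 1)) from WithLp.toLp 2 (fun j => t * a j / (2 * π)))
        (intLattice m)) :
    ∃ c : ℝ, 0 < c ∧ ∀ z : Fin (m + 1) → ℂ, ∀ t : ℝ, 1 ≤ t →
      c * t ^ (1 - ν) * (Finset.univ.inf' Finset.univ_nonempty fun j => ‖z j‖) ≤
        ∑ j, ‖Complex.exp (Complex.I * (a j : ℂ) * (t : ℂ)) - 1‖ *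
          ‖z j‖ := by
  refine ⟨4 * C, by positivity, fun z t ht => ?_⟩
  set M := Finset.univ.inf' Finset.univ_nonempty fun j => ‖z j‖
  have hM : 0 ≤ M := Finset.le_inf' _ _ fun j _ => norm_nonneg _
  let v : EuclideanSpace ℝ (Fin (m + 1)) := WithLp.toLp 2 fun j => t * a j / (2 * π)
  have hchord (j : Fin (m + 1)) :
      4 * |v j - round (v j)| ≤ ‖Complex.exp (Complex.I * (a j : ℂ) * (t : ℂ)) - 1‖ := by
    simpa [mul_assoc, mul_comm (a j : ℂ)] using
      four_mul_abs_sub_round_le_norm_exp_I_mul_sub_one (t * a j)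
  have hlattice : C * t ^ (1 - ν) ≤ ∑ j, |v j - round (v j)| :=
    (hdio t ht).trans (infDist_intLattice_le_sum_abs_sub_round v)
  calc 4 * C * t ^ (1 - ν) * M = C * t ^ (1 - ν) * (4 * M) := by ring
    _ ≤ (∑ j, |v j - round (v j)|) * (4 * M) := mul_le_mul_of_nonneg_right hlattice (by positivity)
    _ = ∑ j, 4 * |v j - round (v j)| * M := by
        rw [Finset.sum_mul]; exact Finset.sum_congr rfl fun j _ => by ring
    _ ≤ ∑ j, ‖Complex.exp (Complex.I * (a j : ℂ) * (t : ℂ)) - 1‖ * ‖z j‖ :=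
        Finset.sum_le_sum fun j _ => mul_le_mul (hchord j)
          (Finset.inf'_le _ (Finset.mem_univ j)) hM (norm_nonneg _)

/-- if `(a_0,…,a_m)` satisfies the Diophantine bound
`dist((t a_0/(2π),…,t a_m/(2π)), ℤ^{m+1}) ≥ C t^{1-ν}` for all `t ≥ 1`,
then there is `c > 0` such that for all `z ∈ ℂ^{m+1}` and `t ≥ 1`,
`∑_j |e^{i a_j t} - 1| |z_j| ≥ c t^{1-ν} min_j |z_j|`. -/
theorem eta_diophantine_lower_bound (m : ℕ) (a : Fin (m + 1) → ℝ) (ha : ∀ j, 0 < a j)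
    (C ν : ℝ) (hC : 0 < C) (hν : 1 ≤ ν)
    (hdio : ∀ t : ℝ, 1 ≤ t →
      C * t ^ (1 - ν) ≤ Metric.infDist
        (show EuclideanSpace ℝ (Fin (m + 1)) from WithLp.toLp 2 (fun j => t * a j / (2 * π)))
        (intLattice m)) :
    ∃ c : ℝ, 0 < c ∧ ∀ z : Fin (m + 1) → ℂ, ∀ t : ℝ, 1 ≤ t →
      c * t ^ (1 - ν) * (Finset.univ.inf' Finset.univ_nonempty fun j => ‖z j‖) ≤
        ∑ j, ‖Complex.exp (Complex.I * (a j : ℂ) * (t : ℂ)) - 1‖ *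
          ‖z j‖ :=
  eta_diophantine_lower_bound_general m a C ν hC hdio
end

section
/- Let m ≥ 0 be an integer and let a_0, …, a_m be positive real numbers satisfying a Diophantine bound with constants C > 0 and ν ≥ 1. Then there exists c > 0 such that for every ε > 0, every real T ≥ 1 and every z ∈ ℂ^{m+1}: if there exists t ∈ [1, T] with ‖φ_t(z) − z‖ ≤ ε (Euclidean norm on ℂ^{m+1}), then min_{0≤j≤m} |z_j| ≤ c · ε · T^{ν−1}. In other words, the recurrence set {z : ∃ t ∈ [1,T], ‖φ_t(z) − z‖ ≤ ε} is contained in {z : min_j |z_j| ≤ c ε T^{ν−1}}. -/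
open scoped Real

/-- The linear flow `φ_t(z)_j = e^{i a_j t} z_j` on `ℂ^{m+1}`. -/
noncomputable def linFlow (m : ℕ) (a : Fin (m + 1) → ℝ) (t : ℝ)
    (z : EuclideanSpace ℂ (Fin (m + 1))) : EuclideanSpace ℂ (Fin (m + 1)) :=
  WithLp.toLp 2 (fun j => Complex.exp (Complex.I * (a j : ℂ) * (t : ℂ)) * z j)

/-! Write `x_j = t a_j / 2π`. Jordan's inequality gives
`|e^{i a_j t} - 1| = 2 |sin (π x_j)| ≥ 4 |x_j - round x_j|`, so
`‖φ_t z - z‖ ≥ 4 · dist(x, ℤ^{m+1}) · min_k |z_k| ≥ 4 C t^{1-ν} · min_k |z_k|`,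
and `t^{1-ν} ≥ T^{1-ν}` for `t ≤ T` because `ν ≥ 1`. -/

lemma two_mul_abs_sub_round_le_abs_sin_pi_mul (x : ℝ) :
    2 * |x - round x| ≤ |Real.sin (π * x)| := by
  have hperiodic : |Real.sin (π * x)| = |Real.sin (π * (x - round x))| := by
    rw [show π * (x - round x) = π * x - round x * π by ring, Real.sin_sub_int_mul_pi,
      abs_mul, abs_neg_one_zpow, one_mul]
  have hjordan := Real.mul_abs_le_abs_sin (x := π * (x - round x)) (by
    rw [abs_mul, abs_of_pos Real.pi_pos]
    nlinarith [abs_sub_round x, Real.pi_pos])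
  rw [hperiodic]
  rwa [abs_mul, abs_of_pos Real.pi_pos, ← mul_assoc, div_mul_cancel₀ _ Real.pi_ne_zero] at hjordan

lemma four_mul_abs_sub_round_le_norm_exp_sub_one (x : ℝ) :
    4 * |x - round x| ≤ ‖Complex.exp (Complex.I * (2 * π * x : ℝ)) - 1‖ := by
  rw [Complex.norm_exp_I_mul_ofReal_sub_one, Real.norm_eq_abs, abs_mul, abs_two,
    show 2 * π * x / 2 = π * x by ring]
  linarith [two_mul_abs_sub_round_le_abs_sin_pi_mul x]

lemma EuclideanSpace.norm_le_norm_of_forall {ι 𝕜 𝕜' : Type*} [Fintype ι] [RCLike 𝕜] [RCLike 𝕜']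
    {x : EuclideanSpace 𝕜 ι} {y : EuclideanSpace 𝕜' ι} (h : ∀ i, ‖x i‖ ≤ ‖y i‖) :
    ‖x‖ ≤ ‖y‖ := by
  rw [EuclideanSpace.norm_eq, EuclideanSpace.norm_eq]
  gcongr with i
  exact h i

lemma linFlow_sub_apply (m : ℕ) (a : Fin (m + 1) → ℝ) (t : ℝ)
    (z : EuclideanSpace ℂ (Fin (m + 1))) (j : Fin (m + 1)) :
    (linFlow m a t z - z) j = (Complex.exp (Complex.I * (a j * t : ℝ)) - 1) * z j := by
  simp only [linFlow, PiLp.sub_apply, Complex.ofReal_mul, mul_assoc, sub_one_mul]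

lemma four_mul_infDist_intLattice_mul_le_norm_linFlow_sub (m : ℕ) (a : Fin (m + 1) → ℝ)
    (t : ℝ) (z : EuclideanSpace ℂ (Fin (m + 1))) :
    4 * Metric.infDist
        (show EuclideanSpace ℝ (Fin (m + 1)) from WithLp.toLp 2 (fun j => t * a j / (2 * π)))
        (intLattice m) * (Finset.univ.inf' Finset.univ_nonempty fun j => ‖z j‖) ≤
      ‖linFlow m a t z - z‖ := by
  set v : EuclideanSpace ℝ (Fin (m + 1)) := WithLp.toLp 2 (fun j => t * a j / (2 * π))
  set w : EuclideanSpace ℝ (Fin (m + 1)) := WithLp.toLp 2 (fun j => (round (v j) : ℝ))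
  set μ := Finset.univ.inf' Finset.univ_nonempty fun j => ‖z j‖
  have hμ : 0 ≤ μ := Finset.le_inf' _ _ fun j _ => norm_nonneg _
  have hdist : Metric.infDist v (intLattice m) ≤ ‖v - w‖ := by
    rw [← dist_eq_norm]
    exact Metric.infDist_le_dist_of_mem fun j => ⟨round (v j), rfl⟩
  calc 4 * Metric.infDist v (intLattice m) * μ ≤ 4 * ‖v - w‖ * μ := by gcongr
    _ = ‖(4 * μ) • (v - w)‖ := by
        rw [norm_smul, Real.norm_of_nonneg (by positivity)]
        ring
    _ ≤ ‖linFlow m a t z - z‖ := EuclideanSpace.norm_le_norm_of_forall fun j => by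
        rw [linFlow_sub_apply, norm_mul, PiLp.smul_apply, PiLp.sub_apply, norm_smul,
          Real.norm_of_nonneg (by positivity), Real.norm_eq_abs, mul_right_comm]
        have hangle : a j * t = 2 * π * v j := by
          simp only [v]; field_simp
        rw [hangle]
        gcongr
        · exact four_mul_abs_sub_round_le_norm_exp_sub_one (v j)
        · exact Finset.inf'_le _ (Finset.mem_univ j)

theorem recurrence_set_bound_general (m : ℕ) (a : Fin (m + 1) → ℝ)
    (C ν : ℝ) (hC : 0 < C) (hν : 1 ≤ ν)
    (hdio : ∀ t : ℝ, 1 ≤ t →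
      C * t ^ (1 - ν) ≤ Metric.infDist
        (show EuclideanSpace ℝ (Fin (m + 1)) from WithLp.toLp 2 (fun j => t * a j / (2 * π)))
        (intLattice m)) :
    ∃ c : ℝ, 0 < c ∧ ∀ ε : ℝ, 0 < ε → ∀ T : ℝ, 1 ≤ T →
      ∀ z : EuclideanSpace ℂ (Fin (m + 1)),
        (∃ t : ℝ, t ∈ Set.Icc 1 T ∧ ‖linFlow m a t z - z‖ ≤ ε) →
        (Finset.univ.inf' Finset.univ_nonempty fun j => ‖z j‖) ≤
          c * ε * T ^ (ν - 1) := by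
  refine ⟨(4 * C)⁻¹, by positivity, fun ε _ T hT z ⟨t, ⟨ht, htT⟩, hrec⟩ => ?_⟩
  set μ := Finset.univ.inf' Finset.univ_nonempty fun j => ‖z j‖
  have hμ : 0 ≤ μ := Finset.le_inf' _ _ fun j _ => norm_nonneg _
  have hTt : T ^ (1 - ν) ≤ t ^ (1 - ν) :=
    Real.rpow_le_rpow_of_nonpos (by linarith) htT (by linarith)
  have hbound : 4 * (C * T ^ (1 - ν)) * μ ≤ ε := calc
    4 * (C * T ^ (1 - ν)) * μ ≤ 4 * (C * t ^ (1 - ν)) * μ := by gcongr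
    _ ≤ 4 * Metric.infDist _ (intLattice m) * μ := by gcongr; exact hdio t ht
    _ ≤ ‖linFlow m a t z - z‖ := four_mul_infDist_intLattice_mul_le_norm_linFlow_sub m a t z
    _ ≤ ε := hrec
  have hT : 0 < T := by linarith
  rw [← le_div_iff₀' (by positivity)] at hbound
  rwa [show (4 * C)⁻¹ * ε * T ^ (ν - 1) = ε / (4 * (C * T ^ (1 - ν))) by
    rw [← neg_sub 1 ν, Real.rpow_neg hT.le]; field_simp]

/-- under the Diophantine bound with constants `C > 0`, `ν ≥ 1`,
there is `c > 0` such that whenever some time `t ∈ [1,T]` brings `z` within `ε`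
of itself under the flow (Euclidean norm), the minimum modulus of the coordinates
of `z` is at most `c ε T^{ν-1}`. -/
theorem recurrence_set_bound (m : ℕ) (a : Fin (m + 1) → ℝ) (ha : ∀ j, 0 < a j)
    (C ν : ℝ) (hC : 0 < C) (hν : 1 ≤ ν)
    (hdio : ∀ t : ℝ, 1 ≤ t →
      C * t ^ (1 - ν) ≤ Metric.infDist
        (show EuclideanSpace ℝ (Fin (m + 1)) from WithLp.toLp 2 (fun j => t * a j / (2 * π)))
        (intLattice m)) :
    ∃ c : ℝ, 0 < c ∧ ∀ ε : ℝ, 0 < ε → ∀ T : ℝ, 1 ≤ T →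
      ∀ z : EuclideanSpace ℂ (Fin (m + 1)),
        (∃ t : ℝ, t ∈ Set.Icc 1 T ∧ ‖linFlow m a t z - z‖ ≤ ε) →
        (Finset.univ.inf' Finset.univ_nonempty fun j => ‖z j‖) ≤
          c * ε * T ^ (ν - 1) :=
  recurrence_set_bound_general m a C ν hC hν hdio
end

section
/- Suppose there exist C > 0 and ν ≥ 1 such that dist((t ã_0/(2π), …, t ã_m/(2π)), ℤ^{m+1}) ≥ C t^{1−ν} for every real t ≥ 1. Then there exists c > 0 such that for every ε > 0, every real T ≥ 1 and every z ∈ ℂ^{m+1}: if there exist t ∈ [1, T] and an integer k with ‖φ_t(z) − g^k·z‖ ≤ ε (Euclidean norm on ℂ^{m+1}), then min_{0≤j≤m} |z_j| ≤ c · ε · T^{ν−1}. -/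
/-! Coordinatewise, `φ_t(z)_j - (g^k·z)_j = (e^{2πiθ_j} - 1)(g^k·z)_j` with
`θ_j = a_j t/2π - k r_j/q_0`, and the chord bound `|e^{2πiθ} - 1| ≥ 4 dist(θ, ℤ)` turns the
hypothesis into `4 dist(θ_j, ℤ) |z_j| ≤ ε` for every `j`. Since `ã_0 = q_0 a_0` and
`ã_j = a_j - r_j a_0`, rounding the `θ_j` gives a lattice point within
`S · max_j dist(θ_j, ℤ)` of `t ã/2π`, with `S = Σ_j (q_0 + r_j + 1)`. The Diophantine bound
at `t ≤ T` therefore gives `max_j dist(θ_j, ℤ) ≥ (C/S) T^{1-ν}`, and at a maximising index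
`|z_j| ≤ (S/4C) ε T^{ν-1}`. -/

open scoped Real

/-- The `k`-th power of the generator of the `ℤ/q_0` action:
`(g^k · z)_j = e^{2πi k r_j/q_0} z_j`. -/
noncomputable def lensAction (m : ℕ) (q0 : ℕ) (r : Fin (m + 1) → ℕ) (k : ℤ)
    (z : EuclideanSpace ℂ (Fin (m + 1))) : EuclideanSpace ℂ (Fin (m + 1)) :=
  WithLp.toLp 2 (fun j => Complex.exp (2 * (Real.pi : ℂ) * Complex.I * (k : ℂ) * (r j : ℂ) / (q0 : ℂ)) * z j)

lemma EuclideanSpace.norm_le_sum_norm {𝕜 ι : Type*} [RCLike 𝕜] [Fintype ι]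
    (v : EuclideanSpace 𝕜 ι) : ‖v‖ ≤ ∑ i, ‖v i‖ := by
  rw [EuclideanSpace.norm_eq]
  exact Real.sqrt_le_iff.mpr
    ⟨by positivity, Finset.sum_sq_le_sq_sum_of_nonneg fun _ _ => norm_nonneg _⟩

noncomputable def recurrencePhase {ι : Type*} (a : ι → ℝ) (q0 : ℕ) (r : ι → ℕ) (t : ℝ) (k : ℤ)
    (j : ι) : ℝ :=
  a j * t / (2 * π) - k * r j / q0

section Recurrence

open Complex

lemma four_mul_abs_sub_round_le_norm_exp_sub_one_s3 (θ : ℝ) :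
    4 * |θ - round θ| ≤ ‖exp (I * (2 * π * θ : ℝ)) - 1‖ := by
  set d := θ - round θ
  have hperiodic : exp (I * (2 * π * θ : ℝ)) = exp (I * (2 * π * d : ℝ)) := by
    rw [← mul_one (exp (I * (2 * π * d : ℝ))), ← exp_int_mul_two_pi_mul_I (round θ), ← exp_add]
    congr 1
    simp only [d]; push_cast; ring
  have hd : |π * d| ≤ π / 2 := by
    rw [abs_mul, abs_of_pos Real.pi_pos]
    nlinarith [abs_sub_round θ, Real.pi_pos]
  calc 4 * |d| = 2 * (2 / π * |π * d|) := by
        rw [abs_mul, abs_of_pos Real.pi_pos]; field_simp; ring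
    _ ≤ 2 * |Real.sin (π * d)| := by gcongr; exact Real.mul_abs_le_abs_sin hd
    _ = _ := by
        rw [hperiodic, norm_exp_I_mul_ofReal_sub_one, norm_mul, Real.norm_eq_abs, Real.norm_eq_abs,
          abs_two]
        ring_nf

variable {m : ℕ} {a : Fin (m + 1) → ℝ} {q0 : ℕ} {r : Fin (m + 1) → ℕ} {t : ℝ} {k : ℤ}

lemma linFlow_sub_lensAction_apply (z : EuclideanSpace ℂ (Fin (m + 1))) (j : Fin (m + 1)) :
    (linFlow m a t z - lensAction m q0 r k z) j =
      (exp (I * (2 * π * recurrencePhase a q0 r t k j : ℝ)) - 1) * lensAction m q0 r k z j := by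
  have hphase : I * (a j : ℂ) * t = I * (2 * π * recurrencePhase a q0 r t k j : ℝ) +
      2 * (π : ℂ) * I * (k : ℂ) * (r j : ℂ) / (q0 : ℂ) := by
    simp only [recurrencePhase]
    push_cast
    field_simp
    ring
  simp only [PiLp.sub_apply, linFlow, lensAction, hphase, exp_add]
  ring

lemma norm_lensAction_apply (z : EuclideanSpace ℂ (Fin (m + 1))) (j : Fin (m + 1)) :
    ‖lensAction m q0 r k z j‖ = ‖z j‖ := by
  have hphase : 2 * (π : ℂ) * I * (k : ℂ) * (r j : ℂ) / (q0 : ℂ) =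
      ((2 * π * k * r j / q0 : ℝ) : ℂ) * I := by
    push_cast; ring
  simp only [lensAction, PiLp.toLp_apply, norm_mul, hphase, norm_exp_ofReal_mul_I, one_mul]

lemma four_mul_abs_sub_round_mul_norm_le (z : EuclideanSpace ℂ (Fin (m + 1))) (j : Fin (m + 1)) :
    4 * |recurrencePhase a q0 r t k j - round (recurrencePhase a q0 r t k j)| * ‖z j‖ ≤
      ‖linFlow m a t z - lensAction m q0 r k z‖ :=
  calc _ ≤ ‖(linFlow m a t z - lensAction m q0 r k z) j‖ := by
        rw [linFlow_sub_lensAction_apply, norm_mul, norm_lensAction_apply]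
        gcongr
        exact four_mul_abs_sub_round_le_norm_exp_sub_one_s3 _
    _ ≤ _ := PiLp.norm_apply_le _ j

end Recurrence

section Lattice

variable {m : ℕ} {a atil : Fin (m + 1) → ℝ} {q0 : ℕ} {r : Fin (m + 1) → ℕ} {t : ℝ} {k : ℤ}

lemma exists_mem_intLattice_abs_sub_le (hq0 : q0 ≠ 0) (hr0 : r 0 = 1)
    (hatil0 : atil 0 = q0 * a 0) (hatil : ∀ j : Fin (m + 1), j ≠ 0 → atil j = a j - r j * a 0)
    {D : ℝ} (hD : ∀ j, |recurrencePhase a q0 r t k j - round (recurrencePhase a q0 r t k j)| ≤ D) :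
    ∃ N ∈ intLattice m, ∀ j, |t * atil j / (2 * π) - N j| ≤ (q0 + r j + 1) * D := by
  set θ := recurrencePhase a q0 r t k
  have hq0' : (q0 : ℝ) ≠ 0 := Nat.cast_ne_zero.mpr hq0
  have hD0 : 0 ≤ D := (abs_nonneg _).trans (hD 0)
  let N : Fin (m + 1) → ℤ := fun j =>
    if j = 0 then q0 * round (θ 0) + k else round (θ j) - r j * round (θ 0)
  refine ⟨WithLp.toLp 2 fun j => (N j : ℝ), fun j => ⟨N j, rfl⟩, fun j => ?_⟩
  by_cases hj : j = 0
  · subst hj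
    have hoffset : t * atil 0 / (2 * π) - N 0 = q0 * (θ 0 - round (θ 0)) := by
      simp only [N, θ, recurrencePhase, if_pos, hatil0, hr0]
      push_cast
      field_simp
      ring
    rw [PiLp.toLp_apply, hoffset, abs_mul, Nat.abs_cast]
    nlinarith [hD 0]
  · have hoffset : t * atil j / (2 * π) - N j =
        (θ j - round (θ j)) - r j * (θ 0 - round (θ 0)) := by
      simp only [N, θ, recurrencePhase, if_neg hj, hatil j hj, hr0]
      push_cast
      field_simp
      ring
    rw [PiLp.toLp_apply, hoffset]
    calc _ ≤ |θ j - round (θ j)| + r j * |θ 0 - round (θ 0)| := by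
          grw [abs_sub, abs_mul, Nat.abs_cast]
      _ ≤ (q0 + r j + 1) * D := by nlinarith [hD j, hD 0]

lemma infDist_intLattice_le (hq0 : q0 ≠ 0) (hr0 : r 0 = 1)
    (hatil0 : atil 0 = q0 * a 0) (hatil : ∀ j : Fin (m + 1), j ≠ 0 → atil j = a j - r j * a 0)
    {D : ℝ} (hD : ∀ j, |recurrencePhase a q0 r t k j - round (recurrencePhase a q0 r t k j)| ≤ D) :
    Metric.infDist (WithLp.toLp 2 fun j => t * atil j / (2 * π) : EuclideanSpace ℝ (Fin (m + 1)))
      (intLattice m) ≤ (∑ j, (q0 + r j + 1 : ℝ)) * D := by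
  obtain ⟨N, hN, hclose⟩ := exists_mem_intLattice_abs_sub_le hq0 hr0 hatil0 hatil hD
  calc _ ≤ ‖(WithLp.toLp 2 fun j => t * atil j / (2 * π) : EuclideanSpace ℝ (Fin (m + 1))) - N‖ :=
        (Metric.infDist_le_dist_of_mem hN).trans_eq (dist_eq_norm _ _)
    _ ≤ ∑ j, (q0 + r j + 1 : ℝ) * D :=
        (EuclideanSpace.norm_le_sum_norm _).trans (Finset.sum_le_sum fun j _ => hclose j)
    _ = _ := Finset.sum_mul .. |>.symm

end Lattice

theorem lens_recurrence_set_bound_general (m : ℕ)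
    (a : Fin (m + 1) → ℝ)
    (q0 : ℕ) (hq0 : 1 < q0) (r : Fin (m + 1) → ℕ) (hr0 : r 0 = 1)
    (atil : Fin (m + 1) → ℝ) (hatil0 : atil 0 = q0 * a 0)
    (hatil : ∀ j : Fin (m + 1), j ≠ 0 → atil j = a j - (r j : ℝ) * a 0)
    (C ν : ℝ) (hC : 0 < C) (hν : 1 ≤ ν)
    (hdio : ∀ t : ℝ, 1 ≤ t →
      C * t ^ (1 - ν) ≤ Metric.infDist
        (show EuclideanSpace ℝ (Fin (m + 1)) from WithLp.toLp 2 (fun j => t * atil j / (2 * π)))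
        (intLattice m)) :
    ∃ c : ℝ, 0 < c ∧ ∀ ε : ℝ, 0 < ε → ∀ T : ℝ, 1 ≤ T →
      ∀ z : EuclideanSpace ℂ (Fin (m + 1)),
        (∃ t : ℝ, t ∈ Set.Icc 1 T ∧ ∃ k : ℤ,
          ‖linFlow m a t z - lensAction m q0 r k z‖ ≤ ε) →
        (Finset.univ.inf' Finset.univ_nonempty fun j => ‖z j‖) ≤
          c * ε * T ^ (ν - 1) := by
  set S : ℝ := ∑ j, (q0 + r j + 1 : ℝ)
  refine ⟨S / (4 * C), by positivity, fun ε hε T hT z ⟨t, ⟨ht1, htT⟩, k, hclose⟩ => ?_⟩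
  set d := fun j => |recurrencePhase a q0 r t k j - round (recurrencePhase a q0 r t k j)|
  obtain ⟨j, -, hj⟩ := Finset.univ.exists_max_image d Finset.univ_nonempty
  have hdist : C * T ^ (1 - ν) ≤ S * d j :=
    calc C * T ^ (1 - ν) ≤ C * t ^ (1 - ν) := mul_le_mul_of_nonneg_left
          (Real.rpow_le_rpow_of_nonpos (by linarith) htT (by linarith)) hC.le
      _ ≤ S * d j := (hdio t ht1).trans <|
          infDist_intLattice_le (by omega) hr0 hatil0 hatil fun i => hj i (Finset.mem_univ i)
  have hzj : 4 * d j * ‖z j‖ ≤ ε := (four_mul_abs_sub_round_mul_norm_le z j).trans hclose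
  have hS : 0 < S := by positivity
  have hdj : C * T ^ (1 - ν) / S ≤ d j := by rwa [div_le_iff₀' hS]
  calc _ ≤ ‖z j‖ := Finset.inf'_le _ (Finset.mem_univ j)
    _ ≤ ε / (4 * (C * T ^ (1 - ν) / S)) := by
        have : 0 < T ^ (1 - ν) := Real.rpow_pos_of_pos (by linarith) _
        rw [le_div_iff₀ (by positivity)]
        nlinarith [norm_nonneg (z j)]
    _ = S / (4 * C) * ε * T ^ (ν - 1) := by
        rw [show ν - 1 = -(1 - ν) by ring, Real.rpow_neg (by linarith)]
        field_simp

/-- in the lens space setting, under the Diophantine bound on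
`(ã_0,…,ã_m)` with constants `C > 0`, `ν ≥ 1`, there is `c > 0` such that
whenever `‖φ_t(z) - g^k·z‖ ≤ ε` for some `t ∈ [1,T]` and `k ∈ ℤ`, one has
`min_j |z_j| ≤ c ε T^{ν-1}`. -/
theorem lens_recurrence_set_bound (m : ℕ) (hm : 1 ≤ m)
    (a : Fin (m + 1) → ℝ) (ha : ∀ j, 0 < a j)
    (q0 : ℕ) (hq0 : 1 < q0) (r : Fin (m + 1) → ℕ) (hr0 : r 0 = 1)
    (atil : Fin (m + 1) → ℝ) (hatil0 : atil 0 = q0 * a 0)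
    (hatil : ∀ j : Fin (m + 1), j ≠ 0 → atil j = a j - (r j : ℝ) * a 0)
    (C ν : ℝ) (hC : 0 < C) (hν : 1 ≤ ν)
    (hdio : ∀ t : ℝ, 1 ≤ t →
      C * t ^ (1 - ν) ≤ Metric.infDist
        (show EuclideanSpace ℝ (Fin (m + 1)) from WithLp.toLp 2 (fun j => t * atil j / (2 * π)))
        (intLattice m)) :
    ∃ c : ℝ, 0 < c ∧ ∀ ε : ℝ, 0 < ε → ∀ T : ℝ, 1 ≤ T →
      ∀ z : EuclideanSpace ℂ (Fin (m + 1)),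
        (∃ t : ℝ, t ∈ Set.Icc 1 T ∧ ∃ k : ℤ,
          ‖linFlow m a t z - lensAction m q0 r k z‖ ≤ ε) →
        (Finset.univ.inf' Finset.univ_nonempty fun j => ‖z j‖) ≤
          c * ε * T ^ (ν - 1) :=
  lens_recurrence_set_bound_general m a q0 hq0 r hr0 atil hatil0 hatil C ν hC hν hdio
end

section
/- Let m ≥ 1 be an integer and a_0, …, a_m positive real numbers, and let E := { z ∈ ℂ^{m+1} : Σ_{j=0}^{m} a_j |z_j|² = 1 } be the ellipsoid. Then there exists a constant C > 0 such that for every δ > 0, the (2m+1)-dimensional Hausdorff measure of the set { z ∈ E : min_{0≤j≤m} |z_j| ≤ δ } is at most C·δ². -/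
open MeasureTheory

/-- `ℂ^{m+1}`, identified with Euclidean space `ℝ^{2m+2}`, carries the Borel
σ-algebra. -/
noncomputable instance (m : ℕ) : MeasurableSpace (EuclideanSpace ℂ (Fin (m + 1))) :=
  borel _

instance (m : ℕ) : BorelSpace (EuclideanSpace ℂ (Fin (m + 1))) := ⟨rfl⟩

open Filter Topology
open scoped NNReal ENNReal

/-!
In real coordinates the ellipsoid is `{x | ∑ w_i x_i² = 1}` in `ℝ^N`, and `|z_j| ≤ δ` forces two of
these coordinates into `[-δ, δ]`. Every point of it has a coordinate with `w_k x_k² ≥ 1/N`, and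
these points form the two graphs `x_k = ±√((1 - ∑_{i ≠ k} w_i x_i²) / w_k)` over the compact set
`{∑_{i ≠ k} w_i x_i² ≤ 1 - 1/N}`, where the square root is smooth, hence Lipschitz. A Lipschitz
map enlarges `(N-1)`-dimensional Hausdorff measure by at most a constant factor, so the part of a
graph where two other coordinates lie in `[-δ, δ]` has measure `O(δ²)`: it is the image of a box
with two sides of length `2δ`. For small `δ` the graph coordinate itself cannot be one of the small
ones, and for large `δ` the finite total measure of the ellipsoid suffices.
-/

theorem LocallyLipschitzOn.of_forall_contDiffAt {E F : Type*} [NormedAddCommGroup E]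
    [NormedSpace ℝ E] [NormedAddCommGroup F] [NormedSpace ℝ F] {f : E → F} {s : Set E}
    (hf : ∀ x ∈ s, ContDiffAt ℝ 1 f x) : LocallyLipschitzOn s f := fun x hx => by
  obtain ⟨K, t, ht, hK⟩ := (hf x hx).exists_lipschitzOnWith
  exact ⟨K, t, mem_nhdsWithin_of_mem_nhds ht, hK⟩

theorem hausdorffMeasure_pi_abs_le {κ : Type*} [Fintype κ] (t : κ → ℝ) :
    μH[Fintype.card κ] {y : κ → ℝ | ∀ p, |y p| ≤ t p} = ∏ p, ENNReal.ofReal (2 * t p) := by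
  have hbox : {y : κ → ℝ | ∀ p, |y p| ≤ t p} = Set.Icc (-t) t := by
    ext y
    simp only [Set.mem_ofPred_eq, Set.mem_Icc, abs_le, Pi.le_def, Pi.neg_apply, forall_and]
  rw [hbox, hausdorffMeasure_pi_real, Real.volume_Icc_pi]
  simp only [Pi.neg_apply, sub_neg_eq_add, two_mul]

theorem Fintype.prod_subtype_ne_ite_mem {ι M : Type*} [Fintype ι] [DecidableEq ι] [CommMonoid M]
    {s : Finset ι} {k : ι} (hk : k ∉ s) (a b : M) :
    ∏ p : {i // i ≠ k}, (if p.1 ∈ s then a else b) =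
      a ^ s.card * b ^ (Fintype.card ι - 1 - s.card) := by
  rw [← Finset.prod_subtype (Finset.univ.erase k) (by simp) (fun i => if i ∈ s then a else b),
    Finset.prod_ite, Finset.prod_const, Finset.prod_const]
  have hcard := Finset.card_filter_add_card_filter_not (s := Finset.univ.erase k) (· ∈ s)
  have hs : Finset.univ.erase k ∩ s = s :=
    Finset.inter_eq_right.2 fun i hi => Finset.mem_erase.2 ⟨ne_of_mem_of_not_mem hi hk, by simp⟩
  rw [Finset.filter_mem_eq_inter, hs, Finset.card_erase_of_mem (Finset.mem_univ k),
    Finset.card_univ] at hcard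
  rw [Finset.filter_mem_eq_inter, hs]
  congr 2
  omega

theorem exists_le_mul_pow_of_eventually_le {f : ℝ → ℝ≥0∞} {C M : ℝ≥0∞} {n : ℕ} (hC : C ≠ ⊤)
    (hM : M ≠ ⊤) (hfM : ∀ δ, f δ ≤ M) (hf : ∀ᶠ δ in 𝓝[>] 0, f δ ≤ C * ENNReal.ofReal δ ^ n) :
    ∃ C' ≠ ⊤, ∀ δ > 0, f δ ≤ C' * ENNReal.ofReal δ ^ n := by
  obtain ⟨δ₀, hδ₀, hsmall⟩ := mem_nhdsGT_iff_exists_Ioo_subset.1 hf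
  have hδ₀n : ENNReal.ofReal δ₀ ^ n ≠ 0 := pow_ne_zero _ (ENNReal.ofReal_pos.2 hδ₀).ne'
  refine ⟨C + M / ENNReal.ofReal δ₀ ^ n, ?_, fun δ hδ => ?_⟩
  · exact ENNReal.add_ne_top.2 ⟨hC, ENNReal.div_ne_top hM hδ₀n⟩
  rcases lt_or_ge δ δ₀ with hlt | hge
  · calc f δ ≤ C * ENNReal.ofReal δ ^ n := hsmall ⟨hδ, hlt⟩
      _ ≤ _ := by gcongr; exact le_self_add
  · calc f δ ≤ M := hfM δ
      _ = M / ENNReal.ofReal δ₀ ^ n * ENNReal.ofReal δ₀ ^ n :=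
        (ENNReal.div_mul_cancel hδ₀n (by simp)).symm
      _ ≤ _ := by gcongr; exact le_add_self

noncomputable section RealEllipsoid

variable {ι : Type*} [Fintype ι] [DecidableEq ι] (w : ι → ℝ)

def realEllipsoid : Set (EuclideanSpace ℝ ι) := {x | ∑ i, w i * x i ^ 2 = 1}

def ellipsoidChartDomain (k : ι) : Set ({i // i ≠ k} → ℝ) :=
  {y | ∑ p : {i // i ≠ k}, w p * y p ^ 2 ≤ 1 - (Fintype.card ι : ℝ)⁻¹}

def ellipsoidChart (k : ι) (σ : SignType) (y : {i // i ≠ k} → ℝ) : EuclideanSpace ℝ ι :=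
  WithLp.toLp 2 fun i =>
    if h : i = k then σ * √((1 - ∑ p : {i // i ≠ k}, w p * y p ^ 2) / w k) else y ⟨i, h⟩

variable {w}

theorem ellipsoidChart_apply_of_ne {k i : ι} (h : i ≠ k) (σ : SignType) (y : {i // i ≠ k} → ℝ) :
    ellipsoidChart w k σ y i = y ⟨i, h⟩ := by
  simp [ellipsoidChart, h]

theorem contDiffAt_ellipsoidChart {n : WithTop ℕ∞} {k : ι} (hk : 0 < w k) (σ : SignType)
    {y : {i // i ≠ k} → ℝ} (hy : ∑ p : {i // i ≠ k}, w p * y p ^ 2 < 1) :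
    ContDiffAt ℝ n (ellipsoidChart w k σ) y := by
  refine (contDiffAt_piLp 2).2 fun i => ?_
  by_cases h : i = k
  · simp only [ellipsoidChart, h, dite_true]
    refine contDiffAt_const.mul (ContDiffAt.sqrt (by fun_prop) ?_)
    exact (div_pos (sub_pos.2 hy) hk).ne'
  · simp only [ellipsoidChart, h, dite_false]
    exact (contDiff_apply ℝ ℝ _).contDiffAt

variable (w) in
theorem abs_le_of_mem_ellipsoidChartDomain (hw : ∀ i, 0 < w i) {k : ι} {y : {i // i ≠ k} → ℝ}
    (hy : y ∈ ellipsoidChartDomain w k) (p : {i // i ≠ k}) : |y p| ≤ √(∑ i, (w i)⁻¹) := by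
  have hp := hw p
  have hterm : w p * y p ^ 2 ≤ 1 := calc
    w p * y p ^ 2 ≤ ∑ q : {i // i ≠ k}, w q * y q ^ 2 :=
      Finset.single_le_sum (f := fun q : {i // i ≠ k} => w q * y q ^ 2)
        (fun q _ => mul_nonneg (hw q).le (sq_nonneg _)) (Finset.mem_univ p)
    _ ≤ 1 := (show _ ≤ _ from hy).trans (by simp)
  refine Real.abs_le_sqrt ?_
  calc y p ^ 2 ≤ (w p)⁻¹ := by rw [inv_eq_one_div, le_div_iff₀ hp]; linarith
    _ ≤ ∑ i, (w i)⁻¹ := Finset.single_le_sum (fun i _ => (inv_pos.2 (hw i)).le) (Finset.mem_univ _)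

variable (w) in
theorem isCompact_ellipsoidChartDomain (hw : ∀ i, 0 < w i) (k : ι) :
    IsCompact (ellipsoidChartDomain w k) := by
  refine Metric.isCompact_of_isClosed_isBounded (isClosed_le (by fun_prop) continuous_const) ?_
  refine (Metric.isBounded_iff_subset_closedBall 0).2 ⟨√(∑ i, (w i)⁻¹), fun y hy => ?_⟩
  refine mem_closedBall_zero_iff.2 ((pi_norm_le_iff_of_nonneg (Real.sqrt_nonneg _)).2 fun p => ?_)
  exact (Real.norm_eq_abs _).trans_le (abs_le_of_mem_ellipsoidChartDomain w hw hy p)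

theorem exists_lipschitzOnWith_ellipsoidChart (hw : ∀ i, 0 < w i) (k : ι) (σ : SignType) :
    ∃ K, LipschitzOnWith K (ellipsoidChart w k σ) (ellipsoidChartDomain w k) := by
  have hN : (1 : ℝ) - (Fintype.card ι : ℝ)⁻¹ < 1 :=
    sub_lt_self 1 (inv_pos.2 (Nat.cast_pos.2 (Fintype.card_pos_iff.2 ⟨k⟩)))
  refine LocallyLipschitzOn.exists_lipschitzOnWith_of_compact
    (isCompact_ellipsoidChartDomain w hw k) (.of_forall_contDiffAt fun y hy => ?_)
  exact contDiffAt_ellipsoidChart (hw k) σ ((show _ ≤ _ from hy).trans_lt hN)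

theorem exists_hausdorffMeasure_ellipsoidChart_image_le (hw : ∀ i, 0 < w i) {s : Finset ι}
    {k : ι} (hk : k ∉ s) (σ : SignType) :
    ∃ C ≠ ⊤, ∀ δ, 0 ≤ δ →
      μH[(Fintype.card ι - 1 : ℕ)] (ellipsoidChart w k σ '' (ellipsoidChartDomain w k ∩
        {y | ∀ p, |y p| ≤ if p.1 ∈ s then δ else √(∑ i, (w i)⁻¹)})) ≤
        C * ENNReal.ofReal δ ^ s.card := by
  obtain ⟨K, hK⟩ := exists_lipschitzOnWith_ellipsoidChart hw k σ
  set d : ℝ := ((Fintype.card ι - 1 : ℕ) : ℝ)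
  set R := √(∑ i, (w i)⁻¹)
  have hcard : Fintype.card {i // i ≠ k} = Fintype.card ι - 1 := by
    simp [Fintype.card_subtype_compl]
  refine ⟨(K : ℝ≥0∞) ^ d * 2 ^ s.card * ENNReal.ofReal (2 * R) ^ (Fintype.card ι - 1 - s.card),
    by finiteness, fun δ hδ => ?_⟩
  have hbox := hausdorffMeasure_pi_abs_le fun p : {i // i ≠ k} => if p.1 ∈ s then δ else R
  rw [hcard] at hbox
  calc _ ≤ (K : ℝ≥0∞) ^ d * μH[d] (ellipsoidChartDomain w k ∩
          {y | ∀ p, |y p| ≤ if p.1 ∈ s then δ else R}) :=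
        (hK.mono Set.inter_subset_left).hausdorffMeasure_image_le (Nat.cast_nonneg _)
    _ ≤ (K : ℝ≥0∞) ^ d * ∏ p : {i // i ≠ k}, ENNReal.ofReal (2 * if p.1 ∈ s then δ else R) := by
        rw [← hbox]
        gcongr
        exact Set.inter_subset_right
    _ = (K : ℝ≥0∞) ^ d * (ENNReal.ofReal (2 * δ) ^ s.card *
          ENNReal.ofReal (2 * R) ^ (Fintype.card ι - 1 - s.card)) := by
        rw [← Fintype.prod_subtype_ne_ite_mem hk]
        congr 1
        exact Finset.prod_congr rfl fun p _ => by split_ifs <;> rfl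
    _ = _ := by
        rw [ENNReal.ofReal_mul zero_le_two, ENNReal.ofReal_ofNat]
        ring

theorem exists_ellipsoidChart_eq (hw : ∀ i, 0 < w i) {x : EuclideanSpace ℝ ι}
    (hx : x ∈ realEllipsoid w) :
    ∃ k, (Fintype.card ι : ℝ)⁻¹ ≤ w k * x k ^ 2 ∧
      (fun p : {i // i ≠ k} => x p) ∈ ellipsoidChartDomain w k ∧
      ellipsoidChart w k (SignType.sign (x k)) (fun p => x p) = x := by
  have hx : ∑ i, w i * x i ^ 2 = 1 := hx
  have hne : (Finset.univ : Finset ι).Nonempty :=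
    Finset.nonempty_of_sum_ne_zero (hx ▸ one_ne_zero)
  have : Nonempty ι := Finset.univ_nonempty_iff.1 hne
  obtain ⟨k, -, hk⟩ := Finset.exists_le_of_sum_le hne (f := fun _ => (Fintype.card ι : ℝ)⁻¹)
    (g := fun i => w i * x i ^ 2) (by simp [hx])
  have hrest : ∑ p : {i // i ≠ k}, w p * x p ^ 2 = 1 - w k * x k ^ 2 := by
    rw [← hx, Fintype.sum_eq_add_sum_subtype_ne _ k]
    ring
  refine ⟨k, hk, by rw [ellipsoidChartDomain, Set.mem_ofPred_eq, hrest]; linarith, ?_⟩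
  ext i
  by_cases h : i = k
  · subst h
    simp only [ellipsoidChart, dite_true, hrest, sub_sub_cancel,
      mul_div_cancel_left₀ _ (hw i).ne', Real.sqrt_sq_eq_abs, sign_mul_abs]
  · exact ellipsoidChart_apply_of_ne h _ _

theorem eventually_hausdorffMeasure_realEllipsoid_abs_le (hw : ∀ i, 0 < w i) (s : Finset ι) :
    ∃ C ≠ ⊤, ∀ᶠ δ in 𝓝[>] 0, μH[(Fintype.card ι - 1 : ℕ)]
      {x ∈ realEllipsoid w | ∀ i ∈ s, |x i| ≤ δ} ≤ C * ENNReal.ofReal δ ^ s.card := by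
  choose C hC hbound using fun (k : {k // k ∉ s}) (σ : SignType) =>
    exists_hausdorffMeasure_ellipsoidChart_image_le hw k.2 σ
  refine ⟨∑ k, ∑ σ, C k σ, ENNReal.sum_ne_top.2 fun k _ => ENNReal.sum_ne_top.2 fun σ _ => hC k σ,
    ?_⟩
  have hsmall : ∀ᶠ δ in 𝓝[>] (0 : ℝ), ∀ k, w k * δ ^ 2 < (Fintype.card ι : ℝ)⁻¹ := by
    refine Filter.eventually_all.2 fun k => ?_
    have hlim : Tendsto (fun δ : ℝ => w k * δ ^ 2) (𝓝[>] 0) (𝓝 0) :=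
      ((continuous_const.mul (continuous_pow 2)).tendsto' 0 0 (by simp)).mono_left
        nhdsWithin_le_nhds
    exact hlim.eventually (gt_mem_nhds (inv_pos.2 (Nat.cast_pos.2 (Fintype.card_pos_iff.2 ⟨k⟩))))
  filter_upwards [self_mem_nhdsWithin, hsmall] with δ hδ hδw
  have hcover : {x ∈ realEllipsoid w | ∀ i ∈ s, |x i| ≤ δ} ⊆
      ⋃ (k : {k // k ∉ s}) (σ : SignType), ellipsoidChart w k σ '' (ellipsoidChartDomain w k ∩
        {y | ∀ p, |y p| ≤ if p.1 ∈ s then δ else √(∑ i, (w i)⁻¹)}) := by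
    rintro x ⟨hx, hxs⟩
    obtain ⟨k, hk, hdom, heq⟩ := exists_ellipsoidChart_eq hw hx
    have hks : k ∉ s := fun hks => by
      have hsq : x k ^ 2 ≤ δ ^ 2 := sq_le_sq.2 ((hxs k hks).trans (le_abs_self δ))
      nlinarith [hw k, hδw k]
    refine Set.mem_iUnion₂.2 ⟨⟨k, hks⟩, SignType.sign (x k), fun p => x p, ⟨hdom, fun p => ?_⟩, heq⟩
    split_ifs with hp
    · exact hxs p hp
    · exact abs_le_of_mem_ellipsoidChartDomain w hw hdom p
  calc _ ≤ _ := measure_mono hcover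
    _ ≤ ∑ k : {k // k ∉ s}, ∑ σ : SignType, μH[(Fintype.card ι - 1 : ℕ)]
          (ellipsoidChart w k σ '' (ellipsoidChartDomain w k ∩
            {y | ∀ p, |y p| ≤ if p.1 ∈ s then δ else √(∑ i, (w i)⁻¹)})) :=
        (measure_iUnion_fintype_le _ _).trans
          (Finset.sum_le_sum fun k _ => measure_iUnion_fintype_le _ _)
    _ ≤ ∑ k : {k // k ∉ s}, ∑ σ : SignType, C k σ * ENNReal.ofReal δ ^ s.card := by
        gcongr with k _ σ _
        exact hbound k σ δ (le_of_lt hδ)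
    _ = _ := by simp only [Finset.sum_mul]

theorem exists_hausdorffMeasure_realEllipsoid_abs_le (hw : ∀ i, 0 < w i) (s : Finset ι) :
    ∃ C ≠ ⊤, ∀ δ > 0, μH[(Fintype.card ι - 1 : ℕ)]
      {x ∈ realEllipsoid w | ∀ i ∈ s, |x i| ≤ δ} ≤ C * ENNReal.ofReal δ ^ s.card := by
  obtain ⟨C, hC, hs⟩ := eventually_hausdorffMeasure_realEllipsoid_abs_le hw s
  -- for `s = ∅` the small-`δ` bound is a bound on the whole ellipsoid
  obtain ⟨C₀, hC₀, h₀⟩ := eventually_hausdorffMeasure_realEllipsoid_abs_le hw ∅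
  have hE : μH[(Fintype.card ι - 1 : ℕ)] (realEllipsoid w) ≤ C₀ := by simpa using h₀.exists
  exact exists_le_mul_pow_of_eventually_le hC (ne_top_of_le_ne_top hC₀ hE)
    (fun δ => measure_mono (Set.sep_subset _ _)) hs

end RealEllipsoid

noncomputable section ComplexEllipsoid

variable (ι : Type*) [Fintype ι]

def EuclideanSpace.complexToReal : EuclideanSpace ℂ ι ≃ₗᵢ[ℝ] EuclideanSpace ℝ (Σ _ : ι, Fin 2) :=
  (LinearIsometryEquiv.piLpCongrRight 2 fun _ => Complex.orthonormalBasisOneI.repr).trans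
    (LinearIsometryEquiv.piLpCurry ℝ 2 fun _ _ => ℝ).symm

variable {ι}

theorem EuclideanSpace.complexToReal_apply (z : EuclideanSpace ℂ ι) (p : Σ _ : ι, Fin 2) :
    complexToReal ι z p = Complex.orthonormalBasisOneI.repr (z p.1) p.2 :=
  rfl

theorem EuclideanSpace.abs_complexToReal_apply_le (z : EuclideanSpace ℂ ι) (p : Σ _ : ι, Fin 2) :
    |complexToReal ι z p| ≤ ‖z p.1‖ := by
  rw [complexToReal_apply, ← Real.norm_eq_abs, ← Complex.orthonormalBasisOneI.repr.norm_map]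
  exact PiLp.norm_apply_le _ _

theorem EuclideanSpace.sum_mul_complexToReal_apply_sq (a : ι → ℝ) (z : EuclideanSpace ℂ ι) :
    ∑ p : Σ _ : ι, Fin 2, a p.1 * complexToReal ι z p ^ 2 = ∑ j, a j * ‖z j‖ ^ 2 := by
  rw [Fintype.sum_sigma]
  refine Finset.sum_congr rfl fun j _ => ?_
  rw [← Complex.orthonormalBasisOneI.repr.norm_map, EuclideanSpace.norm_sq_eq, Finset.mul_sum]
  simp [complexToReal_apply]

end ComplexEllipsoid

theorem exists_hausdorffMeasure_complexEllipsoid_norm_le {ι : Type*} [Fintype ι]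
    [MeasurableSpace (EuclideanSpace ℂ ι)] [BorelSpace (EuclideanSpace ℂ ι)] {a : ι → ℝ}
    (ha : ∀ j, 0 < a j) (j : ι) :
    ∃ C ≠ ⊤, ∀ δ > 0, μH[(2 * Fintype.card ι - 1 : ℕ)]
      {z : EuclideanSpace ℂ ι | ∑ l, a l * ‖z l‖ ^ 2 = 1 ∧ ‖z j‖ ≤ δ} ≤
        C * ENNReal.ofReal δ ^ 2 := by
  classical
  set s := Finset.univ.map (Function.Embedding.sigmaMk (β := fun _ : ι => Fin 2) j)
  obtain ⟨C, hC, hbound⟩ := exists_hausdorffMeasure_realEllipsoid_abs_le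
    (w := fun p : Σ _ : ι, Fin 2 => a p.1) (fun p => ha p.1) s
  refine ⟨C, hC, fun δ hδ => ?_⟩
  have himage : EuclideanSpace.complexToReal ι ''
      {z : EuclideanSpace ℂ ι | ∑ l, a l * ‖z l‖ ^ 2 = 1 ∧ ‖z j‖ ≤ δ} ⊆
      {x ∈ realEllipsoid fun p : Σ _ : ι, Fin 2 => a p.1 | ∀ i ∈ s, |x i| ≤ δ} := by
    rintro _ ⟨z, ⟨hz, hzj⟩, rfl⟩
    refine ⟨(EuclideanSpace.sum_mul_complexToReal_apply_sq a z).trans hz, fun i hi => ?_⟩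
    obtain ⟨l, -, rfl⟩ := Finset.mem_map.1 hi
    exact (EuclideanSpace.abs_complexToReal_apply_le z _).trans hzj
  have hdim : Fintype.card (Σ _ : ι, Fin 2) - 1 = 2 * Fintype.card ι - 1 := by
    simp [mul_comm]
  have hcard : s.card = 2 := by simp [s]
  rw [hcard, hdim] at hbound
  rw [← (EuclideanSpace.complexToReal ι).isometry.hausdorffMeasure_image
    (Or.inl (Nat.cast_nonneg _))]
  exact (measure_mono himage).trans (hbound δ hδ)

theorem ellipsoid_small_coordinate_volume_general (m : ℕ)
    (a : Fin (m + 1) → ℝ) (ha : ∀ j, 0 < a j) :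
    ∃ C : ℝ, 0 < C ∧ ∀ δ : ℝ, 0 < δ →
      μH[(2 * m + 1 : ℝ)]
        {z : EuclideanSpace ℂ (Fin (m + 1)) |
          (∑ j, a j * ‖z j‖ ^ 2 = 1) ∧
          (Finset.univ.inf' Finset.univ_nonempty fun j => ‖z j‖) ≤ δ} ≤
        ENNReal.ofReal (C * δ ^ 2) := by
  choose C hC hbound using exists_hausdorffMeasure_complexEllipsoid_norm_le ha
  have hdim : ((2 * Fintype.card (Fin (m + 1)) - 1 : ℕ) : ℝ) = 2 * m + 1 := by
    rw [Fintype.card_fin, show 2 * (m + 1) - 1 = 2 * m + 1 by omega]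
    push_cast
    ring
  refine ⟨(∑ j, C j).toReal + 1, by positivity, fun δ hδ => ?_⟩
  have hcover : {z : EuclideanSpace ℂ (Fin (m + 1)) | (∑ j, a j * ‖z j‖ ^ 2 = 1) ∧
      (Finset.univ.inf' Finset.univ_nonempty fun j => ‖z j‖) ≤ δ} ⊆
      ⋃ j, {z | ∑ l, a l * ‖z l‖ ^ 2 = 1 ∧ ‖z j‖ ≤ δ} := by
    rintro z ⟨hz, hmin⟩
    obtain ⟨j, -, hj⟩ := (Finset.inf'_le_iff _).1 hmin
    exact Set.mem_iUnion.2 ⟨j, hz, hj⟩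
  calc _ ≤ ∑ j, μH[(2 * m + 1 : ℝ)]
          {z : EuclideanSpace ℂ (Fin (m + 1)) | ∑ l, a l * ‖z l‖ ^ 2 = 1 ∧ ‖z j‖ ≤ δ} :=
        (measure_mono hcover).trans (measure_iUnion_fintype_le _ _)
    _ ≤ ∑ j, C j * ENNReal.ofReal δ ^ 2 := by
        rw [← hdim]
        exact Finset.sum_le_sum fun j _ => hbound j δ hδ
    _ = ENNReal.ofReal ((∑ j, C j).toReal * δ ^ 2) := by
        rw [← Finset.sum_mul, ENNReal.ofReal_mul ENNReal.toReal_nonneg,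
          ENNReal.ofReal_toReal (ENNReal.sum_ne_top.2 fun j _ => hC j), ENNReal.ofReal_pow hδ.le]
    _ ≤ _ := ENNReal.ofReal_le_ofReal (by gcongr; linarith)

/-- for the ellipsoid `E = {z ∈ ℂ^{m+1} : ∑ a_j |z_j|² = 1}` there
is `C > 0` such that for every `δ > 0` the `(2m+1)`-dimensional Hausdorff measure
of `{z ∈ E : min_j |z_j| ≤ δ}` is at most `C δ²`. -/
theorem ellipsoid_small_coordinate_volume (m : ℕ) (hm : 1 ≤ m)
    (a : Fin (m + 1) → ℝ) (ha : ∀ j, 0 < a j) :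
    ∃ C : ℝ, 0 < C ∧ ∀ δ : ℝ, 0 < δ →
      μH[(2 * m + 1 : ℝ)]
        {z : EuclideanSpace ℂ (Fin (m + 1)) |
          (∑ j, a j * ‖z j‖ ^ 2 = 1) ∧
          (Finset.univ.inf' Finset.univ_nonempty fun j => ‖z j‖) ≤ δ} ≤
        ENNReal.ofReal (C * δ ^ 2) :=
  ellipsoid_small_coordinate_volume_general m a ha
end

section
/- Let (X,D) be a metric space, f : X → X a map with L_D(f) < ∞, and k ≥ 1 an integer such that L := L_D(f^k) satisfies 1 ≤ L < ∞; set w := L^{1/k}. Define d_k(x,y) := max_{0 ≤ j ≤ k−1} D(f^j x, f^j y)/w^j. Then: (a) d_k is a metric on X; (b) d_k is bi-Lipschitz equivalent to D, with D(x,y) ≤ d_k(x,y) ≤ M·D(x,y) for M := max_{0≤j≤k−1} L_D(f^j)/w^j < ∞; and (c) f is Lipschitz with respect to d_k with L_{d_k}(f) ≤ L_D(f^k)^{1/k}. -/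
/-! The adapted distance `d_k` is a maximum of rescaled pullbacks `D(f^j ·, f^j ·) / w^j`, so it
is a metric dominating `D` (the term `j = 0`) and dominated by `M·D`. Applying `f` shifts the index:
the `j`-th term at `(f x, f y)` is `w` times the `(j+1)`-st term at `(x, y)`, and the one term that
falls off the end, `D(f^k x, f^k y) / w^k`, is at most `D(x, y)` because `w^k = L_D(f^k)`. -/

open scoped ENNReal NNReal

/-- The (possibly infinite) Lipschitz constant `L_D(f) = sup_{x ≠ y} D(f x, f y)/D(x,y)`
of a self-map of a metric space. -/
noncomputable def lipConst {X : Type*} [MetricSpace X] (f : X → X) : ℝ≥0∞ :=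
  ⨆ (x : X) (y : X) (_ : x ≠ y), ENNReal.ofReal (dist (f x) (f y) / dist x y)

section lipConst

variable {X : Type*} [MetricSpace X] {f : X → X}

lemma lipschitzWith_toNNReal_lipConst (hf : lipConst f ≠ ⊤) :
    LipschitzWith (lipConst f).toNNReal f := by
  refine LipschitzWith.of_dist_le_mul fun x y => ?_
  rcases eq_or_ne x y with rfl | hxy
  · simp
  have hpos : 0 < dist x y := dist_pos.mpr hxy
  have hratio : ENNReal.ofReal (dist (f x) (f y) / dist x y) ≤ lipConst f :=
    le_iSup_of_le x <| le_iSup_of_le y <| le_iSup_of_le hxy le_rfl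
  rw [← ENNReal.ofReal_toReal hf, ENNReal.ofReal_le_ofReal_iff ENNReal.toReal_nonneg,
    div_le_iff₀ hpos] at hratio
  exact hratio

lemma lipConst_le_of_lipschitzWith {K : ℝ≥0} (hf : LipschitzWith K f) : lipConst f ≤ K := by
  refine iSup_le fun x => iSup_le fun y => iSup_le fun hxy => ?_
  rw [← ENNReal.ofReal_coe_nnreal]
  exact ENNReal.ofReal_le_ofReal <| (div_le_iff₀ (dist_pos.mpr hxy)).mpr (hf.dist_le_mul x y)

lemma dist_le_lipConst_mul (hf : lipConst f ≠ ⊤) (x y : X) :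
    dist (f x) (f y) ≤ (lipConst f).toReal * dist x y :=
  (lipschitzWith_toNNReal_lipConst hf).dist_le_mul x y

lemma lipConst_iterate_ne_top (hf : lipConst f ≠ ⊤) (j : ℕ) : lipConst f^[j] ≠ ⊤ :=
  ne_top_of_le_ne_top ENNReal.coe_ne_top <|
    lipConst_le_of_lipschitzWith ((lipschitzWith_toNNReal_lipConst hf).iterate j)

end lipConst

section adaptedDist

variable {X : Type*} [MetricSpace X] (f : X → X) (w : ℝ) {k : ℕ} (hk : (Finset.range k).Nonempty)

noncomputable def adaptedDist (x y : X) : ℝ :=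
  (Finset.range k).sup' hk fun j => dist (f^[j] x) (f^[j] y) / w ^ j

variable {f w}

lemma dist_iterate_div_pow_le_adaptedDist {j : ℕ} (hj : j < k) (x y : X) :
    dist (f^[j] x) (f^[j] y) / w ^ j ≤ adaptedDist f w hk x y :=
  Finset.le_sup' (fun j => dist (f^[j] x) (f^[j] y) / w ^ j) (Finset.mem_range.mpr hj)

lemma dist_le_adaptedDist (x y : X) : dist x y ≤ adaptedDist f w hk x y := by
  simpa using dist_iterate_div_pow_le_adaptedDist hk (Finset.nonempty_range_iff.mp hk).bot_lt x y

lemma adaptedDist_self (x : X) : adaptedDist f w hk x x = 0 := by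
  simp [adaptedDist]

lemma adaptedDist_eq_zero_iff {x y : X} : adaptedDist f w hk x y = 0 ↔ x = y := by
  refine ⟨fun h => dist_le_zero.mp ((dist_le_adaptedDist hk x y).trans_eq h), ?_⟩
  rintro rfl
  exact adaptedDist_self hk x

lemma adaptedDist_comm (x y : X) : adaptedDist f w hk x y = adaptedDist f w hk y x := by
  simp only [adaptedDist, dist_comm]

lemma adaptedDist_triangle (hw : 0 ≤ w) (x y z : X) :
    adaptedDist f w hk x z ≤ adaptedDist f w hk x y + adaptedDist f w hk y z := by
  refine Finset.sup'_le _ _ fun j hj => ?_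
  have hj : j < k := Finset.mem_range.mp hj
  calc dist (f^[j] x) (f^[j] z) / w ^ j
      ≤ dist (f^[j] x) (f^[j] y) / w ^ j + dist (f^[j] y) (f^[j] z) / w ^ j := by
        rw [← add_div]
        exact div_le_div_of_nonneg_right (dist_triangle _ _ _) (pow_nonneg hw j)
    _ ≤ _ := add_le_add (dist_iterate_div_pow_le_adaptedDist hk hj x y)
        (dist_iterate_div_pow_le_adaptedDist hk hj y z)

lemma adaptedDist_le_mul_dist (hf : lipConst f ≠ ⊤) (hw : 0 ≤ w) (x y : X) :
    adaptedDist f w hk x y ≤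
      (Finset.range k).sup' hk (fun j => (lipConst f^[j]).toReal / w ^ j) * dist x y := by
  refine Finset.sup'_le _ _ fun j hj => ?_
  calc dist (f^[j] x) (f^[j] y) / w ^ j
      ≤ (lipConst f^[j]).toReal / w ^ j * dist x y := by
        rw [div_mul_eq_mul_div]
        exact div_le_div_of_nonneg_right
          (dist_le_lipConst_mul (lipConst_iterate_ne_top hf j) x y) (pow_nonneg hw j)
    _ ≤ _ := mul_le_mul_of_nonneg_right
        (Finset.le_sup' (fun j => (lipConst f^[j]).toReal / w ^ j) hj) dist_nonneg

lemma adaptedDist_map_le (hw : 0 < w) (hfk : ∀ x y, dist (f^[k] x) (f^[k] y) ≤ w ^ k * dist x y)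
    (x y : X) : adaptedDist f w hk (f x) (f y) ≤ w * adaptedDist f w hk x y := by
  refine Finset.sup'_le _ _ fun j hj => ?_
  have hshift : dist (f^[j] (f x)) (f^[j] (f y)) / w ^ j =
      w * (dist (f^[j + 1] x) (f^[j + 1] y) / w ^ (j + 1)) := by
    rw [Function.iterate_succ_apply, Function.iterate_succ_apply, pow_succ]
    field_simp
  rw [hshift]
  refine mul_le_mul_of_nonneg_left ?_ hw.le
  have hj : j + 1 ≤ k := Finset.mem_range.mp hj
  rcases hj.lt_or_eq with hlt | heq
  · exact dist_iterate_div_pow_le_adaptedDist hk hlt x y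
  · rw [heq, div_le_iff₀ (pow_pos hw k), mul_comm]
    exact (hfk x y).trans (mul_le_mul_of_nonneg_left (dist_le_adaptedDist hk x y)
      (pow_nonneg hw.le k))

end adaptedDist

theorem adapted_metric_for_iterates_general {X : Type*} [MetricSpace X] (f : X → X)
    (hf : lipConst f < ⊤) (k : ℕ) (hk : 1 ≤ k)
    (hL : 1 ≤ (lipConst (f^[k])).toReal) :
    ∀ w : ℝ, w = (lipConst (f^[k])).toReal ^ ((1 : ℝ) / k) →
    ∀ dk : X → X → ℝ,
      (dk = fun x y => (Finset.range k).sup'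
          (Finset.nonempty_range_iff.mpr (Nat.one_le_iff_ne_zero.mp hk))
          fun j => dist (f^[j] x) (f^[j] y) / w ^ j) →
      -- (a) `d_k` is a metric on `X`
      ((∀ x y, dk x y = 0 ↔ x = y) ∧ (∀ x y, dk x y = dk y x) ∧
        (∀ x y z, dk x z ≤ dk x y + dk y z)) ∧
      -- (b) `d_k` is bi-Lipschitz equivalent to `D`, with finite `M`
      ((∀ j, j ≤ k - 1 → lipConst (f^[j]) < ⊤) ∧
        ∀ x y, dist x y ≤ dk x y ∧
          dk x y ≤ ((Finset.range k).sup'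
              (Finset.nonempty_range_iff.mpr (Nat.one_le_iff_ne_zero.mp hk))
              fun j => (lipConst (f^[j])).toReal / w ^ j) * dist x y) ∧
      -- (c) `f` is Lipschitz for `d_k` with constant `L_D(f^k)^{1/k}`
      (∀ x y, dk (f x) (f y) ≤ w * dk x y) := by
  rintro w hw dk rfl
  have hne : (Finset.range k).Nonempty := Finset.nonempty_range_iff.mpr (by omega)
  have hw_pos : 0 < w := hw ▸ Real.rpow_pos_of_pos (by linarith) _
  have hwk : w ^ k = (lipConst f^[k]).toReal := by
    rw [hw, one_div, Real.rpow_inv_natCast_pow (by linarith) (by omega)]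
  have hfk (x y : X) : dist (f^[k] x) (f^[k] y) ≤ w ^ k * dist x y :=
    hwk ▸ dist_le_lipConst_mul (lipConst_iterate_ne_top hf.ne k) x y
  refine ⟨⟨fun x y => adaptedDist_eq_zero_iff hne, adaptedDist_comm hne,
      adaptedDist_triangle hne hw_pos.le⟩,
    ⟨fun j _ => (lipConst_iterate_ne_top hf.ne j).lt_top,
      fun x y => ⟨dist_le_adaptedDist hne x y, adaptedDist_le_mul_dist hne hf.ne hw_pos.le x y⟩⟩,
    adaptedDist_map_le hne hw_pos hfk⟩

/-- given `f` with `L_D(f) < ∞` and `k ≥ 1` with `L := L_D(f^k)`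
satisfying `1 ≤ L < ∞`, put `w := L^{1/k}` and
`d_k(x,y) := max_{0 ≤ j ≤ k-1} D(f^j x, f^j y)/w^j`. Then (a) `d_k` is a metric,
(b) `D ≤ d_k ≤ M·D` with `M = max_{0 ≤ j ≤ k-1} L_D(f^j)/w^j < ∞`, and
(c) `f` is `w = L_D(f^k)^{1/k}`-Lipschitz for `d_k`. -/
theorem adapted_metric_for_iterates {X : Type*} [MetricSpace X] (f : X → X)
    (hf : lipConst f < ⊤) (k : ℕ) (hk : 1 ≤ k)
    (hfin : lipConst (f^[k]) < ⊤) (hL : 1 ≤ (lipConst (f^[k])).toReal) :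
    ∀ w : ℝ, w = (lipConst (f^[k])).toReal ^ ((1 : ℝ) / k) →
    ∀ dk : X → X → ℝ,
      (dk = fun x y => (Finset.range k).sup'
          (Finset.nonempty_range_iff.mpr (Nat.one_le_iff_ne_zero.mp hk))
          fun j => dist (f^[j] x) (f^[j] y) / w ^ j) →
      -- (a) `d_k` is a metric on `X`
      ((∀ x y, dk x y = 0 ↔ x = y) ∧ (∀ x y, dk x y = dk y x) ∧
        (∀ x y z, dk x z ≤ dk x y + dk y z)) ∧
      -- (b) `d_k` is bi-Lipschitz equivalent to `D`, with finite `M`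
      ((∀ j, j ≤ k - 1 → lipConst (f^[j]) < ⊤) ∧
        ∀ x y, dist x y ≤ dk x y ∧
          dk x y ≤ ((Finset.range k).sup'
              (Finset.nonempty_range_iff.mpr (Nat.one_le_iff_ne_zero.mp hk))
              fun j => (lipConst (f^[j])).toReal / w ^ j) * dist x y) ∧
      -- (c) `f` is Lipschitz for `d_k` with constant `L_D(f^k)^{1/k}`
      (∀ x y, dk (f x) (f y) ≤ w * dk x y) :=
  adapted_metric_for_iterates_general f hf k hk hL
end

section
/- Let X be a set and ρ : X × X → [0,∞) a symmetric function with ρ(x,y) = 0 if and only if x = y, satisfying the weak triangle inequality ρ(x,z) ≤ 2·max{ρ(x,y), ρ(y,z)} for all x, y, z ∈ X. Then there exists a metric D on X such that D(x,y) ≤ ρ(x,y) ≤ 4·D(x,y) for all x, y ∈ X. -/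
open Finset

/-- Key chain lemma for Frink's metrization: for any chain `c 0, c 1, ..., c n` with `n ≥ 2`,
`ρ (c 0) (c n) ≤ 4 S - 2 ρ(c 0, c 1) - 2 ρ(c (n-1), c n)` where `S` is the chain sum. -/
private lemma frink_chain {X : Type*} (ρ : X → X → ℝ)
    (hnonneg : ∀ x y, 0 ≤ ρ x y)
    (hweak : ∀ x y z, ρ x z ≤ 2 * max (ρ x y) (ρ y z)) :
    ∀ n : ℕ, ∀ c : ℕ → X, 2 ≤ n →
      ρ (c 0) (c n) ≤ 4 * (∑ i ∈ Finset.range n, ρ (c i) (c (i + 1)))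
        - 2 * ρ (c 0) (c 1) - 2 * ρ (c (n - 1)) (c n) := by
  intro n
  induction n using Nat.strong_induction_on with
  | _ n IH =>
  intro c hn
  classical
  set S := ∑ i ∈ Finset.range n, ρ (c i) (c (i + 1)) with hS
  have hpair : ρ (c 0) (c 1) + ρ (c (n - 1)) (c n) ≤ S := by
    have hsub : ({0, n - 1} : Finset ℕ) ⊆ Finset.range n := by
      intro i hi
      simp only [Finset.mem_insert, Finset.mem_singleton] at hi
      rcases hi with rfl | rfl <;> simp only [Finset.mem_range] <;> omega
    have hle := Finset.sum_le_sum_of_subset_of_nonneg hsub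
      (fun i _ _ => hnonneg (c i) (c (i + 1)))
    rw [Finset.sum_pair (show (0:ℕ) ≠ n - 1 by omega)] at hle
    rw [show n - 1 + 1 = n by omega] at hle
    simpa using hle
  by_cases hn2 : n = 2
  · subst hn2
    have h := hweak (c 0) (c 1) (c 2)
    have h0 := hnonneg (c 0) (c 1)
    have h1 := hnonneg (c 1) (c 2)
    rw [hS, Finset.sum_range_succ, Finset.sum_range_one]
    norm_num
    rcases max_cases (ρ (c 0) (c 1)) (ρ (c 1) (c 2)) with ⟨he, _⟩ | ⟨he, _⟩ <;>
      rw [he] at h <;> linarith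
  · have hn3 : 3 ≤ n := by omega
    set β := 2 * S + ρ (c 0) (c 1) - ρ (c (n - 1)) (c n) with hβ
    set P : ℕ → Prop := fun j => j = 1 ∨
      4 * (∑ i ∈ Finset.range j, ρ (c i) (c (i + 1))) - 2 * ρ (c (j - 1)) (c j) ≤ β with hP
    set j := Nat.findGreatest P (n - 1) with hjdef
    have hP1 : P 1 := Or.inl rfl
    have hj1 : 1 ≤ j := Nat.le_findGreatest (by omega) hP1
    have hjle : j ≤ n - 1 := Nat.findGreatest_le (n - 1)
    have hPj : P j := Nat.findGreatest_spec (by omega : 1 ≤ n - 1) hP1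
    -- splitting the sum at position k
    have hsplit : ∀ k, k ≤ n →
        S = (∑ i ∈ Finset.range k, ρ (c i) (c (i + 1)))
          + ∑ i ∈ Finset.range (n - k), ρ (c (k + i)) (c (k + i + 1)) := by
      intro k hk
      have e : n = k + (n - k) := by omega
      rw [hS]
      conv_lhs => rw [e]
      rw [Finset.sum_range_add]
    -- left piece bound
    have hL : ρ (c 0) (c j) ≤ 2 * S - ρ (c 0) (c 1) - ρ (c (n - 1)) (c n) := by
      by_cases hj1' : j = 1
      · rw [hj1']
        linarith [hnonneg (c 0) (c 1), hnonneg (c (n - 1)) (c n), hpair]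
      · have hj2 : 2 ≤ j := by omega
        have hjβ : 4 * (∑ i ∈ Finset.range j, ρ (c i) (c (i + 1)))
            - 2 * ρ (c (j - 1)) (c j) ≤ β := hPj.resolve_left hj1'
        have hIHl := IH j (by omega) c hj2
        rw [hβ] at hjβ
        linarith
    -- right piece bound
    have hR : ρ (c j) (c n) ≤ 2 * S - ρ (c 0) (c 1) - ρ (c (n - 1)) (c n) := by
      by_cases hjtop : j = n - 1
      · rw [hjtop]
        linarith [hnonneg (c 0) (c 1), hnonneg (c (n - 1)) (c n), hpair]
      · have hjlt : j + 1 ≤ n - 1 := by omega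
        have hnot : ¬ P (j + 1) :=
          Nat.findGreatest_is_greatest (by omega) hjlt
        have hgt : β < 4 * (∑ i ∈ Finset.range (j + 1), ρ (c i) (c (i + 1)))
            - 2 * ρ (c j) (c (j + 1)) := by
          by_contra hle
          exact hnot (Or.inr (by simpa using not_lt.1 hle))
        have hm2 : 2 ≤ n - j := by omega
        have hIHr := IH (n - j) (by omega) (fun i => c (j + i)) hm2
        rw [show j + 0 = j from rfl] at hIHr
        rw [show j + (n - j) = n by omega] at hIHr
        rw [show j + (n - j - 1) = n - 1 by omega] at hIHr
        have hsum : (∑ i ∈ Finset.range (n - j), ρ (c (j + i)) (c (j + (i + 1))))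
            = ∑ i ∈ Finset.range (n - j), ρ (c (j + i)) (c (j + i + 1)) :=
          Finset.sum_congr rfl (fun i _ => by rw [Nat.add_assoc])
        rw [hsum] at hIHr
        have hsp := hsplit j (by omega)
        have hfj1 : (∑ i ∈ Finset.range (j + 1), ρ (c i) (c (i + 1)))
            = (∑ i ∈ Finset.range j, ρ (c i) (c (i + 1))) + ρ (c j) (c (j + 1)) :=
          Finset.sum_range_succ _ _
        rw [hβ] at hgt
        rw [hfj1] at hgt
        linarith
    -- combine
    have hmax := hweak (c 0) (c j) (c n)
    have hmaxle : max (ρ (c 0) (c j)) (ρ (c j) (c n))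
        ≤ 2 * S - ρ (c 0) (c 1) - ρ (c (n - 1)) (c n) := max_le hL hR
    linarith

/-- Frink's metrization lemma: if `ρ : X × X → [0,∞)` is symmetric,
vanishes exactly on the diagonal, and satisfies the weak triangle inequality
`ρ(x,z) ≤ 2 max{ρ(x,y), ρ(y,z)}`, then there is a metric `D` on `X` with
`D ≤ ρ ≤ 4 D`. -/
theorem frink_metrization {X : Type*} (ρ : X → X → ℝ)
    (hnonneg : ∀ x y, 0 ≤ ρ x y)
    (hsymm : ∀ x y, ρ x y = ρ y x)
    (hzero : ∀ x y, ρ x y = 0 ↔ x = y)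
    (hweak : ∀ x y z, ρ x z ≤ 2 * max (ρ x y) (ρ y z)) :
    ∃ D : X → X → ℝ,
      (∀ x y, 0 ≤ D x y) ∧
      (∀ x y, D x y = D y x) ∧
      (∀ x y, D x y = 0 ↔ x = y) ∧
      (∀ x y z, D x z ≤ D x y + D y z) ∧
      (∀ x y, D x y ≤ ρ x y ∧ ρ x y ≤ 4 * D x y) := by
  classical
  -- the set of chain sums from x to y
  set A : X → X → Set ℝ := fun x y =>
    {s | ∃ n : ℕ, ∃ c : ℕ → X, c 0 = x ∧ c n = y ∧
      s = ∑ i ∈ Finset.range n, ρ (c i) (c (i + 1))} with hA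
  have hmem : ∀ x y, ρ x y ∈ A x y := by
    intro x y
    refine ⟨1, fun i => if i = 0 then x else y, by simp, by simp, ?_⟩
    simp
  have hne : ∀ x y, (A x y).Nonempty := fun x y => ⟨ρ x y, hmem x y⟩
  have hnonneg' : ∀ x y, ∀ s ∈ A x y, (0:ℝ) ≤ s := by
    rintro x y s ⟨n, c, -, -, rfl⟩
    exact Finset.sum_nonneg fun i _ => hnonneg _ _
  have hbdd : ∀ x y, BddBelow (A x y) := fun x y => ⟨0, fun s hs => hnonneg' x y s hs⟩
  set D : X → X → ℝ := fun x y => sInf (A x y) with hD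
  -- chain lemma in final form
  have hchain : ∀ x y, ∀ s ∈ A x y, ρ x y ≤ 4 * s := by
    rintro x y s ⟨n, c, rfl, rfl, rfl⟩
    match n with
    | 0 =>
      have : ρ (c 0) (c 0) = 0 := (hzero _ _).mpr rfl
      simp [this]
    | 1 =>
      rw [Finset.sum_range_one]
      linarith [hnonneg (c 0) (c 1)]
    | (m + 2) =>
      have h := frink_chain ρ hnonneg hweak (m + 2) c (by omega)
      have h1 := hnonneg (c 0) (c 1)
      have h2 := hnonneg (c (m + 2 - 1)) (c (m + 2))
      linarith
  have hDnonneg : ∀ x y, 0 ≤ D x y := fun x y =>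
    le_csInf (hne x y) (hnonneg' x y)
  have hDleρ : ∀ x y, D x y ≤ ρ x y := fun x y => csInf_le (hbdd x y) (hmem x y)
  have hρle4D : ∀ x y, ρ x y ≤ 4 * D x y := by
    intro x y
    have : ρ x y / 4 ≤ D x y :=
      le_csInf (hne x y) (fun s hs => by linarith [hchain x y s hs])
    linarith
  -- symmetry
  have hsub : ∀ x y, A x y ⊆ A y x := by
    rintro x y s ⟨n, c, hc0, hcn, rfl⟩
    refine ⟨n, fun i => c (n - i), by simpa using hcn, by simpa using hc0, ?_⟩
    rw [← Finset.sum_range_reflect (fun i => ρ (c i) (c (i + 1))) n]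
    refine Finset.sum_congr rfl fun i hi => ?_
    rw [Finset.mem_range] at hi
    rw [hsymm]
    rw [show n - 1 - i + 1 = n - i by omega, show n - 1 - i = n - (i + 1) by omega]
  have hDsymm : ∀ x y, D x y = D y x := by
    intro x y
    exact le_antisymm (csInf_le_csInf (hbdd x y) (hne y x) (hsub y x))
      (csInf_le_csInf (hbdd y x) (hne x y) (hsub x y))
  -- concatenation
  have hcat : ∀ x y z : X, ∀ a ∈ A x y, ∀ b ∈ A y z, a + b ∈ A x z := by
    rintro x y z a ⟨n, c, hc0, hcn, rfl⟩ b ⟨m, c', hc0', hcm', rfl⟩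
    refine ⟨n + m, fun i => if i < n then c i else c' (i - n), ?_, ?_, ?_⟩
    · by_cases h0 : 0 < n
      · simp [h0, hc0]
      · have hn0 : n = 0 := by omega
        subst hn0
        simp only [Nat.lt_irrefl, if_false, Nat.sub_zero]
        rw [hc0', ← hcn, hc0]
    · simp only [show ¬ (n + m < n) by omega, if_false,
        show n + m - n = m by omega, hcm']
    · rw [Finset.sum_range_add]
      congr 1
      · refine Finset.sum_congr rfl fun i hi => ?_
        rw [Finset.mem_range] at hi
        by_cases h2 : i + 1 < n
        · simp [hi, h2]
        · have he : i + 1 = n := by omega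
          simp [hi, h2, he, hc0', hcn]
      · refine Finset.sum_congr rfl fun i hi => ?_
        simp [show ¬ (n + i < n) by omega, show ¬ (n + i + 1 < n) by omega,
          show n + i - n = i by omega, show n + i + 1 - n = i + 1 by omega]
  have hDtri : ∀ x y z, D x z ≤ D x y + D y z := by
    intro x y z
    have key : ∀ a ∈ A x y, ∀ b ∈ A y z, D x z ≤ a + b := fun a ha b hb =>
      csInf_le (hbdd x z) (hcat x y z a ha b hb)
    have h1 : ∀ b ∈ A y z, D x z - b ≤ D x y := fun b hb =>
      le_csInf (hne x y) (fun a ha => by linarith [key a ha b hb])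
    have h2 : D x z - D x y ≤ D y z :=
      le_csInf (hne y z) (fun b hb => by linarith [h1 b hb])
    linarith
  have hDzero : ∀ x y, D x y = 0 ↔ x = y := by
    intro x y
    constructor
    · intro h
      have h4 : ρ x y ≤ 4 * D x y := hρle4D x y
      rw [h] at h4
      have := hnonneg x y
      exact (hzero x y).mp (by linarith)
    · rintro rfl
      have h0 : (0:ℝ) ∈ A x x := ⟨0, fun _ => x, rfl, rfl, by simp⟩
      exact le_antisymm (csInf_le (hbdd x x) h0) (hDnonneg x x)
  exact ⟨D, hDnonneg, hDsymm, hDzero, hDtri, fun x y => ⟨hDleρ x y, hρle4D x y⟩⟩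
end

section
/- Let (X,d) be a compact metric space and f : X → X a Lipschitz map with constant L ≥ 1, i.e. d(f(x),f(y)) ≤ L·d(x,y) for all x,y. Then h_top(f) ≤ dimH(X) · log L. -/
/-!
Fix `s > dimH X`, so that `μH[s] X = 0`, and a scale `ε`. By compactness `X` is covered by
finitely many sets `E i` of diameter at most `r i ≤ ε` with `∑ r i ^ s ≤ ε ^ s`. If `f` is
`K`-Lipschitz with `K > 1`, then `E i` stays `ε`-small during the first `a i` iterates, where
`a i` is the first time with `ε < K ^ (a i) * r i`; therefore `∑ (K ^ s) ^ (-a i) ≤ 1`. Following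
`E i` for `a i` steps and then restarting covers `X` up to time `n` by at most
`(K ^ s) ^ (n + max a)` sets that are `ε`-small along their orbits, so the entropy at scale `ε` is
at most `s log K`; now let `s` decrease to `dimH X`. For `K = 1` every `ε`-cover is already a
dynamical cover, so the entropy is `0`.
-/

open MeasureTheory Set Function Filter Topology Metric
open scoped ENNReal NNReal Finset

lemma exists_escape_time {K r ε : ℝ} (hK : 1 < K) (hr : 0 < r) (hrε : r ≤ ε) :
    ∃ m : ℕ, 0 < m ∧ (∀ k < m, K ^ k * r ≤ ε) ∧ ε < K ^ m * r := by
  classical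
  have hex : ∃ m : ℕ, ε < K ^ m * r := by
    obtain ⟨m, hm⟩ := pow_unbounded_of_one_lt (ε / r) hK
    exact ⟨m, (div_lt_iff₀ hr).1 hm⟩
  refine ⟨Nat.find hex, Nat.pos_of_ne_zero fun h ↦ ?_, fun k hk ↦ ?_, Nat.find_spec hex⟩
  · have := Nat.find_spec hex
    rw [h, pow_zero, one_mul] at this
    exact this.not_ge hrε
  · exact not_lt.1 (Nat.find_min hex hk)

lemma inv_rpow_pow_le_div_of_lt_pow_mul {K r ε s : ℝ} {m : ℕ} (hK : 0 < K) (hε : 0 < ε)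
    (hs : 0 ≤ s) (h : ε < K ^ m * r) : ((K ^ s) ^ m)⁻¹ ≤ r ^ s / ε ^ s := by
  have hεs : 0 < ε ^ s := Real.rpow_pos_of_pos hε s
  have hr : 0 < r := pos_of_mul_pos_right (hε.trans h) (by positivity)
  rw [inv_le_comm₀ (by positivity) (by positivity), inv_div, div_le_iff₀ (by positivity),
    Real.rpow_pow_comm hK.le, ← Real.mul_rpow (by positivity) hr.le]
  exact Real.rpow_le_rpow hε.le h.le hs

lemma exists_add_rpow_lt {d s η c : ℝ} (hs : 0 < s) (hη : 0 < η) (hc : 0 < c) :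
    ∃ ρ, 0 < ρ ∧ ρ ≤ c ∧ (d + ρ) ^ s < d ^ s + η := by
  have hcont : Tendsto (fun ρ : ℝ ↦ (d + ρ) ^ s) (𝓝[>] 0) (𝓝 (d ^ s)) := by
    have : ContinuousAt (fun ρ : ℝ ↦ (d + ρ) ^ s) 0 :=
      (continuousAt_const.add continuousAt_id).rpow_const (Or.inr hs.le)
    simpa using this.tendsto.mono_left nhdsWithin_le_nhds
  obtain ⟨ρ, hlt, hρ⟩ :=
    ((hcont.eventually (gt_mem_nhds (lt_add_of_pos_right _ hη))).and (Ioc_mem_nhdsGT hc)).exists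
  exact ⟨ρ, hρ.1, hρ.2, hlt⟩

lemma exists_cover_tsum_ediam_rpow_lt_of_hausdorffMeasure_eq_zero {X : Type*} [EMetricSpace X]
    [MeasurableSpace X] [BorelSpace X] {K : Set X} {s : ℝ} (hs : 0 < s) (hK : μH[s] K = 0)
    {r η : ℝ≥0∞} (hr : 0 < r) (hη : 0 < η) :
    ∃ c : ℕ → Set X, K ⊆ ⋃ n, c n ∧ (∀ n, ediam (c n) ≤ r) ∧ ∑' n, ediam (c n) ^ s < η := by
  rw [Measure.hausdorffMeasure_apply, ← nonpos_iff_eq_zero, iSup₂_le_iff] at hK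
  obtain ⟨c, hcov, hdiam, hsum⟩ : ∃ c : ℕ → Set X, K ⊆ ⋃ n, c n ∧ (∀ n, ediam (c n) ≤ r) ∧
      ∑' n, ⨆ _ : (c n).Nonempty, ediam (c n) ^ s < η := by
    simpa only [iInf_lt_iff, exists_prop] using (hK r hr).trans_lt hη
  refine ⟨c, hcov, hdiam, lt_of_eq_of_lt (tsum_congr fun n ↦ ?_) hsum⟩
  rcases (c n).eq_empty_or_nonempty with h | h
  · simp [h, hs]
  · simp [h]

lemma ediam_thickening_le_ofReal {X : Type*} [PseudoEMetricSpace X] (s : Set X) {δ : ℝ}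
    (hδ : 0 ≤ δ) : ediam (thickening δ s) ≤ ediam s + ENNReal.ofReal (2 * δ) := by
  have := ediam_thickening_le (s := s) δ.toNNReal
  rwa [Real.coe_toNNReal _ hδ, ← ENNReal.ofReal.eq_def, ← ENNReal.ofReal_ofNat 2,
    ← ENNReal.ofReal_mul zero_le_two] at this

theorem IsCompact.exists_finset_cover_sum_rpow_le_of_hausdorffMeasure_eq_zero {X : Type*}
    [MetricSpace X] [MeasurableSpace X] [BorelSpace X] {K : Set X} (hK : IsCompact K) {s : ℝ}
    (hs : 0 < s) (hμ : μH[s] K = 0) {ε δ : ℝ} (hε : 0 < ε) (hδ : 0 < δ) :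
    ∃ (t : Finset ℕ) (E : ℕ → Set X) (r : ℕ → ℝ), K ⊆ ⋃ i ∈ t, E i ∧
      (∀ i, 0 < r i ∧ r i ≤ ε ∧ ∀ x ∈ E i, ∀ y ∈ E i, dist x y ≤ r i) ∧
      ∑ i ∈ t, r i ^ s ≤ δ := by
  obtain ⟨c, hcov, hdiam, hsum⟩ := exists_cover_tsum_ediam_rpow_lt_of_hausdorffMeasure_eq_zero hs
    hμ (ENNReal.ofReal_pos.2 (half_pos hε)) (ENNReal.ofReal_pos.2 (half_pos hδ))
  set d : ℕ → ℝ := fun n ↦ (ediam (c n)).toReal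
  have hd : ∀ n, ediam (c n) = ENNReal.ofReal (d n) := fun n ↦
    (ENNReal.ofReal_toReal (ne_top_of_le_ne_top ENNReal.ofReal_ne_top (hdiam n))).symm
  have hdε : ∀ n, d n ≤ ε / 2 := fun n ↦
    (ENNReal.ofReal_le_ofReal_iff (half_pos hε).le).1 (hd n ▸ hdiam n)
  -- Open thickenings, so that compactness applies; their extra cost sums to at most `δ / 2`.
  choose ρ hρ0 hρε hρ using fun n ↦
    exists_add_rpow_lt (d := d n) hs (η := δ / 2 / 2 / 2 ^ n) (by positivity) (half_pos hε)
  set E : ℕ → Set X := fun n ↦ thickening (ρ n / 2) (c n)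
  have hE : ∀ n, ediam (E n) ≤ ENNReal.ofReal (d n + ρ n) := fun n ↦ by
    refine (ediam_thickening_le_ofReal (c n) (half_pos (hρ0 n)).le).trans_eq ?_
    rw [hd, mul_div_cancel₀ _ two_ne_zero, ENNReal.ofReal_add ENNReal.toReal_nonneg (hρ0 n).le]
  obtain ⟨t, ht⟩ := hK.elim_finite_subcover E (fun n ↦ isOpen_thickening)
    (hcov.trans (iUnion_mono fun n ↦ self_subset_thickening (half_pos (hρ0 n)) _))
  have hr : ∀ n, 0 < d n + ρ n := fun n ↦ add_pos_of_nonneg_of_pos ENNReal.toReal_nonneg (hρ0 n)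
  refine ⟨t, E, fun n ↦ d n + ρ n, ht, fun n ↦ ⟨hr n, by linarith [hdε n, hρε n],
    fun x hx y hy ↦ ?_⟩, ?_⟩
  · exact (edist_le_ofReal (hr n).le).1 ((edist_le_ediam_of_mem hx hy).trans (hE n))
  have hdsum : ∑ n ∈ t, d n ^ s ≤ δ / 2 := by
    rw [← ENNReal.ofReal_le_ofReal_iff (half_pos hδ).le,
      ENNReal.ofReal_sum_of_nonneg fun n _ ↦ Real.rpow_nonneg ENNReal.toReal_nonneg _]
    calc ∑ n ∈ t, ENNReal.ofReal (d n ^ s) = ∑ n ∈ t, ediam (c n) ^ s := by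
          refine Finset.sum_congr rfl fun n _ ↦ ?_
          rw [hd, ENNReal.ofReal_rpow_of_nonneg ENNReal.toReal_nonneg hs.le]
      _ ≤ ∑' n, ediam (c n) ^ s := ENNReal.sum_le_tsum t
      _ ≤ ENNReal.ofReal (δ / 2) := hsum.le
  have hgeom : ∑ n ∈ t, δ / 2 / 2 / 2 ^ n ≤ δ / 2 :=
    ((summable_geometric_two' _).sum_le_tsum t fun _ _ ↦ by positivity).trans_eq
      (tsum_geometric_two' _)
  calc ∑ n ∈ t, (d n + ρ n) ^ s ≤ ∑ n ∈ t, (d n ^ s + δ / 2 / 2 / 2 ^ n) :=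
        Finset.sum_le_sum fun n _ ↦ (hρ n).le
    _ ≤ δ := by rw [Finset.sum_add_distrib]; linarith

namespace Dynamics

variable {X : Type*} {T : X → X} {F : Set X} {U : SetRel X X} {m n : ℕ}

lemma inter_preimage_prod_subset_dynEntourage {A B : Set X} {k : ℕ}
    (hA : A ×ˢ A ⊆ dynEntourage T U m) (hB : B ×ˢ B ⊆ dynEntourage T U k) :
    (A ∩ T^[m] ⁻¹' B) ×ˢ (A ∩ T^[m] ⁻¹' B) ⊆ dynEntourage T U (m + k) := by
  rintro ⟨x, y⟩ ⟨⟨hxA, hxB⟩, hyA, hyB⟩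
  refine mem_dynEntourage.2 fun j hj ↦ ?_
  rcases lt_or_ge j m with hjm | hjm
  · exact mem_dynEntourage.1 (hA ⟨hxA, hyA⟩) j hjm
  · obtain ⟨i, rfl⟩ := Nat.exists_eq_add_of_le hjm
    rw [add_comm, iterate_add_apply, iterate_add_apply]
    exact mem_dynEntourage.1 (hB ⟨hxB, hyB⟩) i (by omega)

lemma exists_cover_inter_preimage (hT : MapsTo T F F) {E : Set X} {k : ℕ}
    (hE : E ×ˢ E ⊆ dynEntourage T U m) {𝒢 : Finset (Set X)} (h𝒢cov : F ⊆ ⋃₀ ↑𝒢)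
    (h𝒢 : ∀ B ∈ 𝒢, B ×ˢ B ⊆ dynEntourage T U k) :
    ∃ ℬ : Finset (Set X), F ∩ E ⊆ ⋃₀ ↑ℬ ∧ (∀ A ∈ ℬ, A ×ˢ A ⊆ dynEntourage T U (m + k)) ∧
      #ℬ ≤ #𝒢 := by
  classical
  refine ⟨𝒢.image (E ∩ T^[m] ⁻¹' ·), ?_, ?_, Finset.card_image_le⟩
  · rintro y ⟨hyF, hyE⟩
    obtain ⟨B, hB, hyB⟩ := h𝒢cov (hT.iterate m hyF)
    exact ⟨_, Finset.mem_image_of_mem _ hB, hyE, hyB⟩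
  · simp only [Finset.mem_image, forall_exists_index, and_imp]
    rintro _ B hB rfl
    exact inter_preimage_prod_subset_dynEntourage hE (h𝒢 B hB)

lemma coverMincard_le_card_of_prod_subset {𝒜 : Finset (Set X)} (hcov : F ⊆ ⋃₀ ↑𝒜)
    (h𝒜 : ∀ A ∈ 𝒜, A ×ˢ A ⊆ dynEntourage T U n) : coverMincard T F U n ≤ #𝒜 := by
  classical
  let s : Finset X :=
    (𝒜.filter Set.Nonempty).attach.image fun A ↦ (Finset.mem_filter.1 A.2).2.some
  have hs : IsDynCoverOf T F U n s := by
    intro y hy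
    obtain ⟨A, hA, hyA⟩ := hcov hy
    have hA' : A ∈ 𝒜.filter Set.Nonempty := Finset.mem_filter.2 ⟨hA, y, hyA⟩
    refine ⟨_, Finset.mem_image_of_mem _ (Finset.mem_attach _ ⟨A, hA'⟩), h𝒜 A hA ⟨hyA, ?_⟩⟩
    exact (Finset.mem_filter.1 hA').2.some_mem
  calc coverMincard T F U n ≤ #s := hs.coverMincard_le_card
    _ ≤ #𝒜 := by
      norm_cast
      exact Finset.card_image_le.trans (Finset.card_attach.trans_le (Finset.card_filter_le _ _))

lemma coverEntropyEntourage_le_log_of_le_mul_pow {C b : ℝ≥0∞} (hC : C ≠ ∞)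
    (h : ∀ n, (coverMincard T F U n : ℝ≥0∞) ≤ C * b ^ n) :
    coverEntropyEntourage T F U ≤ ENNReal.log b :=
  (ExpGrowth.expGrowthSup_le_of_eventually_le hC (.of_forall h)).trans_eq
    ExpGrowth.expGrowthSup_pow

theorem exists_finset_cover_card_le_pow {ι : Type*} [Fintype ι] (hT : MapsTo T F F)
    {E : ι → Set X} (hcov : F ⊆ ⋃ i, E i) {a : ι → ℕ} (ha : ∀ i, 0 < a i)
    (hE : ∀ i, E i ×ˢ E i ⊆ dynEntourage T U (a i)) {b : ℝ} (hb : 1 ≤ b)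
    (hsum : ∑ i, (b ^ a i)⁻¹ ≤ 1) (n : ℕ) :
    ∃ 𝒜 : Finset (Set X), F ⊆ ⋃₀ ↑𝒜 ∧ (∀ A ∈ 𝒜, A ×ˢ A ⊆ dynEntourage T U n) ∧
      (#𝒜 : ℝ) ≤ b ^ (n + Finset.univ.sup a) := by
  classical
  set N := Finset.univ.sup a
  induction n using Nat.strong_induction_on with | _ n ih =>
  have piece : ∀ i, ∃ ℬ : Finset (Set X), F ∩ E i ⊆ ⋃₀ ↑ℬ ∧
      (∀ A ∈ ℬ, A ×ˢ A ⊆ dynEntourage T U n) ∧ (#ℬ : ℝ) * b ^ a i ≤ b ^ (n + N) := by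
    intro i
    have hai : a i ≤ N := Finset.le_sup (Finset.mem_univ i)
    rcases le_or_gt n (a i) with hn | hn
    · refine ⟨{E i}, fun y hy ↦ ⟨E i, Finset.mem_singleton_self _, hy.2⟩, ?_, ?_⟩
      · simpa using (hE i).trans (dynEntourage_antitone T U hn)
      · simpa using pow_le_pow_right₀ hb (hai.trans (Nat.le_add_left _ n))
    · obtain ⟨𝒢, h𝒢cov, h𝒢, h𝒢card⟩ := ih (n - a i) (by have := ha i; omega)
      obtain ⟨ℬ, hℬcov, hℬ, hℬcard⟩ := exists_cover_inter_preimage hT (hE i) h𝒢cov h𝒢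
      refine ⟨ℬ, hℬcov, fun A hA ↦ (hℬ A hA).trans (dynEntourage_antitone T U (by omega)), ?_⟩
      calc (#ℬ : ℝ) * b ^ a i ≤ b ^ (n - a i + N) * b ^ a i := by
            gcongr; exact (Nat.cast_le.2 hℬcard).trans h𝒢card
        _ = b ^ (n + N) := by rw [← pow_add]; congr 1; omega
  choose ℬ hℬcov hℬ hℬcard using piece
  refine ⟨Finset.univ.biUnion ℬ, fun y hy ↦ ?_, ?_, ?_⟩
  · obtain ⟨i, hi⟩ := mem_iUnion.1 (hcov hy)
    obtain ⟨A, hA, hyA⟩ := hℬcov i ⟨hy, hi⟩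
    exact ⟨A, Finset.mem_biUnion.2 ⟨i, Finset.mem_univ i, hA⟩, hyA⟩
  · simp only [Finset.mem_biUnion, Finset.mem_univ, true_and, forall_exists_index]
    exact fun A i hA ↦ hℬ i A hA
  · have hb0 : 0 < b := zero_lt_one.trans_le hb
    calc (#(Finset.univ.biUnion ℬ) : ℝ) ≤ ∑ i, (#(ℬ i) : ℝ) := mod_cast Finset.card_biUnion_le
      _ ≤ ∑ i, b ^ (n + N) * (b ^ a i)⁻¹ := by
          gcongr with i
          exact (le_mul_inv_iff₀ (pow_pos hb0 _)).2 (hℬcard i)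
      _ = b ^ (n + N) * ∑ i, (b ^ a i)⁻¹ := by rw [Finset.mul_sum]
      _ ≤ b ^ (n + N) := mul_le_of_le_one_right (by positivity) hsum

lemma _root_.LipschitzWith.prod_subset_dynEntourage [PseudoMetricSpace X] {f : X → X}
    {K : ℝ≥0} (hf : LipschitzWith K f) {E : Set X} {r ε : ℝ} {m : ℕ}
    (hE : ∀ x ∈ E, ∀ y ∈ E, dist x y ≤ r) (hm : ∀ k < m, K ^ k * r ≤ ε) :
    E ×ˢ E ⊆ dynEntourage f {p | dist p.1 p.2 ≤ ε} m := by
  rintro ⟨x, y⟩ ⟨hx, hy⟩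
  refine mem_dynEntourage.2 fun k hk ↦ ?_
  calc dist (f^[k] x) (f^[k] y) ≤ K ^ k * dist x y := by
        simpa using (hf.iterate k).dist_le_mul x y
    _ ≤ K ^ k * r := by gcongr; exact hE x hx y hy
    _ ≤ ε := hm k hk

variable {f : X → X}

theorem coverEntropy_nonpos_of_lipschitzWith_one [PseudoMetricSpace X] (hF : IsCompact F)
    (hf : LipschitzWith 1 f) : coverEntropy f F ≤ 0 := by
  rw [coverEntropy_eq_iSup_basis uniformity_basis_dist_le]
  refine iSup₂_le fun ε hε ↦ ?_
  obtain ⟨t, -, ht⟩ := hF.elim_nhds_subcover (fun x ↦ ball x ε) fun x _ ↦ ball_mem_nhds x hε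
  have hcover : ∀ n, IsDynCoverOf f F {p | dist p.1 p.2 ≤ ε} n t := fun n y hy ↦ by
    obtain ⟨x, hx, hyx⟩ := mem_iUnion₂.1 (ht hy)
    refine ⟨x, hx, mem_dynEntourage.2 fun k _ ↦ ?_⟩
    have := (hf.iterate k).dist_le_mul y x
    rw [one_pow, NNReal.coe_one, one_mul] at this
    exact this.trans (mem_ball.1 hyx).le
  have := coverEntropyEntourage_le_log_of_le_mul_pow (C := #t) (b := 1) (ENNReal.natCast_ne_top _)
    fun n ↦ by simpa using ENat.toENNReal_le.2 (hcover n).coverMincard_le_card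
  simpa using this

section

variable [MetricSpace X] [MeasurableSpace X] [BorelSpace X]

theorem coverEntropyEntourage_le_mul_log_of_hausdorffMeasure_eq_zero (hF : IsCompact F)
    (hfF : MapsTo f F F) {K : ℝ≥0} (hK : 1 < K) (hf : LipschitzWith K f) {s : ℝ} (hs : 0 < s)
    (hμ : μH[s] F = 0) {ε : ℝ} (hε : 0 < ε) :
    coverEntropyEntourage f F {p | dist p.1 p.2 ≤ ε} ≤ ((s * Real.log K : ℝ) : EReal) := by
  obtain ⟨t, E, r, hcov, hr, hsum⟩ :=
    hF.exists_finset_cover_sum_rpow_le_of_hausdorffMeasure_eq_zero hs hμ hε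
      (Real.rpow_pos_of_pos hε s)
  choose a ha hsmall hlarge using fun i ↦ exists_escape_time hK (hr i).1 (hr i).2.1
  set b : ℝ := (K : ℝ) ^ s
  have hb : 1 ≤ b := Real.one_le_rpow hK.le hs.le
  have hweights : ∑ i : t, (b ^ a i)⁻¹ ≤ 1 :=
    calc ∑ i : t, (b ^ a i)⁻¹ ≤ ∑ i : t, r i ^ s / ε ^ s := Finset.sum_le_sum fun i _ ↦
          inv_rpow_pow_le_div_of_lt_pow_mul (zero_lt_one.trans hK) hε hs.le (hlarge i)
      _ = (∑ i ∈ t, r i ^ s) / ε ^ s := by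
          rw [Finset.sum_coe_sort t fun i ↦ r i ^ s / ε ^ s, Finset.sum_div]
      _ ≤ 1 := div_le_one_of_le₀ hsum (Real.rpow_nonneg hε.le s)
  set A := (Finset.univ : Finset t).sup fun i ↦ a i
  have hcount : ∀ n, (coverMincard f F {p | dist p.1 p.2 ≤ ε} n : ℝ≥0∞) ≤
      ENNReal.ofReal (b ^ A) * ENNReal.ofReal b ^ n := fun n ↦ by
    obtain ⟨𝒜, h𝒜cov, h𝒜, h𝒜card⟩ := exists_finset_cover_card_le_pow hfF
      (E := fun i : t ↦ E i) (hcov.trans_eq (Set.biUnion_eq_iUnion _ _)) (fun i ↦ ha i)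
      (fun i ↦ hf.prod_subset_dynEntourage (hr i).2.2 (hsmall i)) hb hweights n
    calc (coverMincard f F {p | dist p.1 p.2 ≤ ε} n : ℝ≥0∞) ≤ #𝒜 := by
          exact_mod_cast coverMincard_le_card_of_prod_subset h𝒜cov h𝒜
      _ ≤ ENNReal.ofReal (b ^ (n + A)) := by
          rw [← ENNReal.ofReal_natCast]; exact ENNReal.ofReal_le_ofReal h𝒜card
      _ = ENNReal.ofReal (b ^ A) * ENNReal.ofReal b ^ n := by
          rw [pow_add, ENNReal.ofReal_mul (by positivity), ENNReal.ofReal_pow (by positivity),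
            mul_comm]
  calc coverEntropyEntourage f F {p | dist p.1 p.2 ≤ ε} ≤ ENNReal.log (ENNReal.ofReal b) :=
        coverEntropyEntourage_le_log_of_le_mul_pow ENNReal.ofReal_ne_top hcount
    _ = ((s * Real.log K : ℝ) : EReal) := by
        rw [ENNReal.log_ofReal_of_pos (by positivity), Real.log_rpow (by positivity)]

theorem coverEntropy_le_mul_log_of_hausdorffMeasure_eq_zero (hF : IsCompact F)
    (hfF : MapsTo f F F) {K : ℝ≥0} (hK : 1 < K) (hf : LipschitzWith K f) {s : ℝ} (hs : 0 < s)
    (hμ : μH[s] F = 0) : coverEntropy f F ≤ ((s * Real.log K : ℝ) : EReal) := by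
  rw [coverEntropy_eq_iSup_basis uniformity_basis_dist_le]
  exact iSup₂_le fun ε hε ↦
    coverEntropyEntourage_le_mul_log_of_hausdorffMeasure_eq_zero hF hfF hK hf hs hμ hε

end

theorem coverEntropy_le_mul_log_of_dimH_lt [MetricSpace X] [CompactSpace X] {K : ℝ≥0}
    (hK : 1 < K) (hf : LipschitzWith K f) {u : ℝ≥0∞} (hdu : dimH (univ : Set X) < u)
    (hu : u ≠ ∞) :
    coverEntropy f univ ≤ ((u * ENNReal.ofReal (Real.log K) : ℝ≥0∞) : EReal) := by
  borelize X
  have hμ : μH[u.toReal] (univ : Set X) = 0 :=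
    hausdorffMeasure_of_dimH_lt (d := u.toNNReal) (by rwa [ENNReal.coe_toNNReal hu])
  have := coverEntropy_le_mul_log_of_hausdorffMeasure_eq_zero isCompact_univ (mapsTo_univ f univ)
    hK hf (ENNReal.toReal_pos (pos_of_gt hdu).ne' hu) hμ
  rwa [EReal.coe_ennreal_mul, EReal.coe_ennreal_ofReal,
    max_eq_left (Real.log_nonneg (NNReal.one_le_coe.2 hK.le)), ← EReal.coe_ennreal_toReal hu,
    ← EReal.coe_mul]

end Dynamics

/-- for a compact metric space `X` and a Lipschitz map `f : X → X`
with constant `L ≥ 1`, the topological entropy of `f` is at most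
`dimH(X) · log L`. -/
theorem entropy_le_dimH_mul_log_lipschitz {X : Type*} [MetricSpace X] [CompactSpace X]
    (f : X → X) (L : ℝ) (hL : 1 ≤ L)
    (hf : ∀ x y : X, dist (f x) (f y) ≤ L * dist x y) :
    Dynamics.coverEntropy f Set.univ ≤
      ((dimH (Set.univ : Set X) * ENNReal.ofReal (Real.log L) : ℝ≥0∞) : EReal) := by
  have hlip : LipschitzWith L.toNNReal f := LipschitzWith.of_dist_le' hf
  rcases hL.eq_or_lt with rfl | hL1
  · exact (Dynamics.coverEntropy_nonpos_of_lipschitzWith_one isCompact_univ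
      (by simpa using hlip)).trans (EReal.coe_ennreal_nonneg _)
  have hK : 1 < L.toNNReal := Real.one_lt_toNNReal.2 hL1
  set d := dimH (univ : Set X)
  rcases eq_or_ne d ∞ with hd | hd
  · simp [hd, ENNReal.top_mul, Real.log_pos hL1]
  have key : ∀ u ∈ Ioo d ∞, Dynamics.coverEntropy f univ ≤
      ((u * ENNReal.ofReal (Real.log L) : ℝ≥0∞) : EReal) := fun u hu ↦ by
    simpa [Real.coe_toNNReal _ (zero_le_one.trans hL)] using
      Dynamics.coverEntropy_le_mul_log_of_dimH_lt hK hlip hu.1 hu.2.ne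
  have : (𝓝[>] d).NeBot := nhdsGT_neBot_of_exists_gt ⟨∞, hd.lt_top⟩
  refine ge_of_tendsto ?_ (eventually_of_mem (Ioo_mem_nhdsGT hd.lt_top) key)
  exact ((continuous_coe_ennreal_ereal.comp
    (ENNReal.continuous_mul_const ENNReal.ofReal_ne_top)).tendsto d).mono_left nhdsWithin_le_nhds
end
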